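/- arXiv:2112.05894 — 6 statements merged into one kernel-verified Lean document; each statement's English description precedes it below -/
import Mathlib

section
/- Let (P,<) be a finite poset and let L ⊆ 𝒥(P,<) be a subset that is closed under union and intersection and contains a strictly increasing chain J_0 ⊊ J_1 ⊊ ⋯ ⊊ J_{|P|} of |P|+1 order ideals. Then there exists a unique partial order ≺ on P that is stronger than < (i.e., p < q implies p ≺ q) such that L is exactly the set of order ideals of (P,≺). -/
/-!
A strictly increasing chain of `|P| + 1` subsets of `P` grows by exactly one point at each step,
so the sets of `L` separate the points of `P`, and `∅, P ∈ L`. The relation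
"`p ≠ q` and every member of `L` containing `q` contains `p`" is then a strict order stronger
than `<`; each `J ∈ L` is one of its lower sets, and conversely every lower set `J` is the union
over `q ∈ J` of the smallest member of `L` containing `q`, which lies in `L` by finite closure.
Uniqueness holds because a strict order is recovered from its lower sets in the same way.
-/

open Set

/-- `J` is an order ideal (lower set) with respect to the strict order relation `r`:
`p r q` and `q ∈ J` imply `p ∈ J`. -/
def IsLowerIdeal {P : Type*} (r : P → P → Prop) (J : Set P) : Prop :=
  ∀ ⦃p q : P⦄, r p q → q ∈ J → p ∈ J

section MaximalChain

variable {α : Type*} [Finite α] {n : ℕ} {c : Fin (n + 1) → Set α}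

theorem ncard_eq_of_strictMono_fin (hc : StrictMono c) (hn : Nat.card α = n) (i : Fin (n + 1)) :
    (c i).ncard = i := by
  let f : Fin (n + 1) → Fin (n + 1) := fun i =>
    ⟨(c i).ncard, hn ▸ Nat.lt_succ_of_le (ncard_le_card _)⟩
  have hf : StrictMono f := fun i j hij =>
    show (c i).ncard < (c j).ncard from ncard_strictMono (hc hij)
  exact congrArg Fin.val hf.apply_eq

theorem eq_empty_of_strictMono_fin (hc : StrictMono c) (hn : Nat.card α = n) : c 0 = ∅ :=
  (ncard_eq_zero).mp (ncard_eq_of_strictMono_fin hc hn 0)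

theorem eq_univ_of_strictMono_fin (hc : StrictMono c) (hn : Nat.card α = n) :
    c (Fin.last n) = univ := by
  by_contra h
  have := ncard_lt_card h
  rw [ncard_eq_of_strictMono_fin hc hn, hn, Fin.val_last] at this
  exact this.false

theorem exists_sdiff_eq_singleton_of_strictMono_fin (hc : StrictMono c) (hn : Nat.card α = n)
    (i : Fin n) : ∃ x, c i.succ \ c i.castSucc = {x} := by
  rw [← ncard_eq_one, ncard_sdiff (hc.monotone (Fin.castSucc_le_succ i)),
    ncard_eq_of_strictMono_fin hc hn, ncard_eq_of_strictMono_fin hc hn]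
  simp

theorem eq_of_forall_mem_strictMono_fin_iff (hc : StrictMono c) (hn : Nat.card α = n) {p q : α}
    (hpq : ∀ i, p ∈ c i ↔ q ∈ c i) : p = q := by
  obtain ⟨i, hp_succ, hp_cast⟩ : ∃ i : Fin n, p ∈ c i.succ ∧ p ∉ c i.castSucc := by
    by_contra! h
    have hp : ∀ i, p ∈ c i := fun i =>
      Fin.reverseInduction (by simp [eq_univ_of_strictMono_fin hc hn]) (fun i hi => h i hi) i
    simpa [eq_empty_of_strictMono_fin hc hn] using hp 0
  obtain ⟨x, hx⟩ := exists_sdiff_eq_singleton_of_strictMono_fin hc hn i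
  have hp : p ∈ c i.succ \ c i.castSucc := ⟨hp_succ, hp_cast⟩
  have hq : q ∈ c i.succ \ c i.castSucc := ⟨(hpq _).1 hp_succ, mt (hpq _).2 hp_cast⟩
  rw [hx] at hp hq
  exact hp.trans hq.symm

end MaximalChain

/-- The strict order on `α` whose order ideals are the members of `L`, when there is one. -/
def inducedLT {α : Type*} (L : Set (Set α)) (p q : α) : Prop :=
  p ≠ q ∧ ∀ J ∈ L, q ∈ J → p ∈ J

section InducedLT

variable {α : Type*} {L : Set (Set α)}

theorem inducedLT_trans (hsep : ∀ p q, (∀ J ∈ L, p ∈ J ↔ q ∈ J) → p = q) {a b d : α}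
    (hab : inducedLT L a b) (hbd : inducedLT L b d) : inducedLT L a d := by
  refine ⟨?_, fun J hJ hd => hab.2 J hJ (hbd.2 J hJ hd)⟩
  rintro rfl
  exact hab.1 (hsep a b fun J hJ => ⟨hbd.2 J hJ, hab.2 J hJ⟩)

theorem isLowerIdeal_inducedLT_of_mem {J : Set α} (hJ : J ∈ L) : IsLowerIdeal (inducedLT L) J :=
  fun _ _ hpq hq => hpq.2 J hJ hq

theorem mem_of_isLowerIdeal_inducedLT [Finite α] (hsup : SupClosed L) (hinf : InfClosed L)
    (hbot : ∅ ∈ L) (htop : univ ∈ L) {J : Set α} (hJ : IsLowerIdeal (inducedLT L) J) :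
    J ∈ L := by
  have hJ_eq : J = ⋃ q ∈ J, ⋂ K ∈ {K ∈ L | q ∈ K}, K := by
    ext x
    simp only [mem_iUnion, mem_iInter, mem_ofPred_eq, and_imp]
    refine ⟨fun hx => ⟨x, hx, fun K _ hK => hK⟩, fun ⟨q, hq, hxq⟩ => ?_⟩
    obtain rfl | hne := eq_or_ne x q
    · exact hq
    · exact hJ ⟨hne, hxq⟩ hq
  rw [hJ_eq]
  exact hsup.biSup_mem J.toFinite hbot fun q _ =>
    hinf.biInf_mem (toFinite _) htop fun K hK => hK.1

theorem inducedLT_setOf_isLowerIdeal {r : α → α → Prop} (hirr : ∀ p, ¬ r p p)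
    (htr : ∀ a b d, r a b → r b d → r a d) : inducedLT {J | IsLowerIdeal r J} = r := by
  funext p q
  refine propext ⟨fun ⟨hne, hpq⟩ => ?_,
    fun hpq => ⟨fun h => hirr p (h ▸ hpq), fun J hJ hq => hJ hpq hq⟩⟩
  have hbelow : IsLowerIdeal r {x | r x q ∨ x = q} := by
    rintro a b hab (hbq | rfl)
    · exact Or.inl (htr a b q hab hbq)
    · exact Or.inl hab
  exact (hpq _ hbelow (Or.inr rfl)).resolve_right hne

end InducedLT

theorem stmt0_general {P : Type*} [Fintype P] (lt : P → P → Prop)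
    (hirr : ∀ p, ¬ lt p p)
    (L : Set (Set P))
    (hLideals : ∀ J ∈ L, IsLowerIdeal lt J)
    (hunion : ∀ J1 ∈ L, ∀ J2 ∈ L, J1 ∪ J2 ∈ L)
    (hinter : ∀ J1 ∈ L, ∀ J2 ∈ L, J1 ∩ J2 ∈ L)
    (c : Fin (Fintype.card P + 1) → Set P)
    (hcL : ∀ i, c i ∈ L) (hcmono : StrictMono c) :
    ∃! r : P → P → Prop,
      ((∀ p, ¬ r p p) ∧ (∀ a b d, r a b → r b d → r a d) ∧
        (∀ p q, lt p q → r p q) ∧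
        L = {J : Set P | IsLowerIdeal r J}) := by
  have hcard := Nat.card_eq_fintype_card (α := P)
  have hsep : ∀ p q, (∀ J ∈ L, p ∈ J ↔ q ∈ J) → p = q := fun p q hpq =>
    eq_of_forall_mem_strictMono_fin_iff hcmono hcard fun i => hpq _ (hcL i)
  have hbot : ∅ ∈ L := eq_empty_of_strictMono_fin hcmono hcard ▸ hcL 0
  have htop : univ ∈ L := eq_univ_of_strictMono_fin hcmono hcard ▸ hcL _
  refine ⟨inducedLT L, ⟨fun p h => h.1 rfl, fun a b d => inducedLT_trans hsep,
    fun p q hpq => ⟨fun h => hirr p (h ▸ hpq), fun J hJ => hLideals J hJ hpq⟩, ?_⟩, ?_⟩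
  · ext J
    exact ⟨isLowerIdeal_inducedLT_of_mem,
      mem_of_isLowerIdeal_inducedLT (fun _ h₁ _ h₂ => hunion _ h₁ _ h₂)
        (fun _ h₁ _ h₂ => hinter _ h₁ _ h₂) hbot htop⟩
  · rintro r ⟨hirr', htr', -, rfl⟩
    exact (inducedLT_setOf_isLowerIdeal hirr' htr').symm

/-- Let `(P, lt)` be a finite poset (given by its strict order relation) and let
`L ⊆ 𝒥(P, lt)` be closed under union and intersection and contain a strictly increasing
chain of `|P| + 1` order ideals.  Then there is a unique partial (strict) order `r` on `P`
stronger than `lt` whose set of order ideals is exactly `L`. -/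
theorem stmt0 {P : Type*} [Fintype P] (lt : P → P → Prop)
    (hirr : ∀ p, ¬ lt p p) (htr : ∀ a b c, lt a b → lt b c → lt a c)
    (L : Set (Set P))
    (hLideals : ∀ J ∈ L, IsLowerIdeal lt J)
    (hunion : ∀ J1 ∈ L, ∀ J2 ∈ L, J1 ∪ J2 ∈ L)
    (hinter : ∀ J1 ∈ L, ∀ J2 ∈ L, J1 ∩ J2 ∈ L)
    (c : Fin (Fintype.card P + 1) → Set P)
    (hcL : ∀ i, c i ∈ L) (hcmono : StrictMono c) :
    ∃! r : P → P → Prop,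
      ((∀ p, ¬ r p p) ∧ (∀ a b d, r a b → r b d → r a d) ∧
        (∀ p q, lt p q → r p q) ∧
        L = {J : Set P | IsLowerIdeal r J}) :=
  stmt0_general lt hirr L hLideals hunion hinter c hcL hcmono
end

section
/- Let n ≥ 1 and d_1,…,d_n ≥ 1 be integers, let V = {(j,i) : 1 ≤ j ≤ n, 1 ≤ i ≤ d_j}, and let S = ℂ[X_v : v ∈ V] be the polynomial ring over ℂ. Then a multihomogeneous ideal I ⊆ S equals the vanishing ideal of the set Z(I) ∖ (A_1 ∪ ⋯ ∪ A_n) if and only if I is radical and (I : 𝔐_j) = I for every j ∈ [1,n]. -/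
open MvPolynomial

/-!
A vanishing ideal is radical, and it is saturated with respect to every ideal `J` whose zero
locus misses the set; this gives one direction, with `Z(𝔐_j) = A_j`. Conversely, let `I` be
radical and saturated with respect to `J_a`. If `p` vanishes on `Z(I)` off
`Z(J_a) ∪ ⋃_{j ∈ s} Z(J_j)`, then for every `q ∈ J_a` the product `p q` vanishes on `Z(I)` off
`⋃_{j ∈ s} Z(J_j)`. Induction on `s`, ending with the Nullstellensatz `𝕀(Z(I)) = √I = I`, gives
`p q ∈ I` for all `q ∈ J_a`, hence `p ∈ (I : J_a) = I`.
-/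

/-- The `m`-multihomogeneous component of a polynomial in the variables
`X_{(j,i)}`, `j ∈ Fin n`, `i ∈ Fin (d j)`: the sum of the terms whose total degree in the
`j`-th group of variables equals `m j` for every `j`. -/
noncomputable def mhComponent {n : ℕ} {d : Fin n → ℕ} (m : Fin n → ℕ)
    (p : MvPolynomial (Σ j : Fin n, Fin (d j)) ℂ) :
    MvPolynomial (Σ j : Fin n, Fin (d j)) ℂ :=
  ∑ s ∈ p.support.filter
      (fun s => ∀ j : Fin n, (∑ i : Fin (d j), s ⟨j, i⟩) = m j),
    monomial s (coeff s p)

namespace MvPolynomial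

variable {k K σ : Type*} [Field k] [Field K] [Algebra k K]

theorem radical_vanishingIdeal (W : Set (σ → K)) :
    (vanishingIdeal k W).radical = vanishingIdeal k W :=
  le_antisymm (fun _ ⟨m, hp⟩ x hx => IsNilpotent.eq_zero ⟨m, by simpa using hp x hx⟩)
    Ideal.le_radical

theorem colon_vanishingIdeal_of_disjoint {W : Set (σ → K)} {J : Ideal (MvPolynomial σ k)}
    (hW : Disjoint W (zeroLocus K J)) :
    (vanishingIdeal k W).colon (J : Set (MvPolynomial σ k)) = vanishingIdeal k W := by
  refine le_antisymm (fun r hr x hx => ?_) Ideal.le_colon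
  obtain ⟨q, hqJ, hqx⟩ : ∃ q ∈ J, aeval x q ≠ 0 := by
    simpa using hW.notMem_of_mem_left hx
  have hrq : aeval x (r * q) = 0 := Submodule.mem_colon.mp hr q hqJ x hx
  rw [map_mul] at hrq
  exact (mul_eq_zero.mp hrq).resolve_right hqx

theorem zeroLocus_span_range_X {ι : Type*} (f : ι → σ) :
    zeroLocus K (Ideal.span (Set.range fun i => (X (f i) : MvPolynomial σ k))) =
      {x | ∀ i, x (f i) = 0} := by
  simp [zeroLocus_span]

variable [IsAlgClosed K] [Finite σ]

theorem vanishingIdeal_zeroLocus_diff_le {ι : Type*} {I : Ideal (MvPolynomial σ k)}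
    (hI : I.radical = I) (J : ι → Ideal (MvPolynomial σ k)) (s : Finset ι)
    (hsat : ∀ j ∈ s, I.colon (J j : Set (MvPolynomial σ k)) = I) :
    vanishingIdeal k (zeroLocus K I \ ⋃ j ∈ s, zeroLocus K (J j)) ≤ I := by
  classical
  induction s using Finset.induction_on with
  | empty => simpa [vanishingIdeal_zeroLocus_eq_radical] using hI.le
  | insert a s _ ih =>
    intro p hp
    rw [← hsat a (s.mem_insert_self a)]
    refine Submodule.mem_colon.mpr fun q hq => ih (fun j hj => hsat j (s.mem_insert_of_mem hj)) ?_
    intro x ⟨hxI, hxs⟩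
    rw [smul_eq_mul, map_mul]
    by_cases hxa : x ∈ zeroLocus K (J a)
    · rw [hxa q hq, mul_zero]
    · have hx : x ∉ ⋃ j ∈ insert a s, zeroLocus K (J j) := by
        rw [Finset.set_biUnion_insert]
        exact fun h => h.elim hxa hxs
      rw [hp x ⟨hxI, hx⟩, zero_mul]

theorem eq_vanishingIdeal_zeroLocus_diff_iff {ι : Type*} [Finite ι]
    (I : Ideal (MvPolynomial σ k)) (J : ι → Ideal (MvPolynomial σ k)) :
    I = vanishingIdeal k (zeroLocus K I \ ⋃ j, zeroLocus K (J j)) ↔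
      I.radical = I ∧ ∀ j, I.colon (J j : Set (MvPolynomial σ k)) = I := by
  have := Fintype.ofFinite ι
  constructor
  · intro hI
    rw [hI]
    refine ⟨radical_vanishingIdeal _, fun j => colon_vanishingIdeal_of_disjoint ?_⟩
    exact Set.disjoint_left.mpr fun x hx hxj => hx.2 (Set.mem_iUnion_of_mem j hxj)
  · rintro ⟨hrad, hsat⟩
    refine le_antisymm ?_ ?_
    · exact (le_vanishingIdeal_zeroLocus I).trans (vanishingIdeal_anti_mono Set.sdiff_subset)
    · simpa using vanishingIdeal_zeroLocus_diff_le hrad J Finset.univ fun j _ => hsat j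

end MvPolynomial

theorem stmt2_general {n : ℕ} (d : Fin n → ℕ)
    (I : Ideal (MvPolynomial (Σ j : Fin n, Fin (d j)) ℂ)) :
    (∀ p : MvPolynomial (Σ j : Fin n, Fin (d j)) ℂ,
        p ∈ I ↔ ∀ x : (Σ j : Fin n, Fin (d j)) → ℂ,
          x ∈ ({x | ∀ q ∈ I, eval x q = 0} \
                ⋃ j : Fin n, {x | ∀ i : Fin (d j), x ⟨j, i⟩ = 0}) →
            eval x p = 0)
    ↔ (I.radical = I ∧ ∀ j : Fin n,
        Submodule.colon I
          (Ideal.span (Set.range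
            (fun i : Fin (d j) => (X ⟨j, i⟩ : MvPolynomial (Σ j : Fin n, Fin (d j)) ℂ)))) = I) := by
  rw [← eq_vanishingIdeal_zeroLocus_diff_iff (K := ℂ), Ideal.ext_iff]
  simp only [zeroLocus_span_range_X]
  rfl

/-- Multiprojective Nullstellensatz: a multihomogeneous ideal `I` in
`ℂ[X_v : v ∈ V]`, `V = {(j,i) : 1 ≤ j ≤ n, 1 ≤ i ≤ d_j}`, equals the vanishing ideal of
`Z(I) ∖ (A_1 ∪ ⋯ ∪ A_n)` if and only if `I` is radical and `(I : 𝔐_j) = I` for all `j`. -/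
theorem stmt2 {n : ℕ} (hn : 1 ≤ n) (d : Fin n → ℕ) (hd : ∀ j, 1 ≤ d j)
    (I : Ideal (MvPolynomial (Σ j : Fin n, Fin (d j)) ℂ))
    (hmh : ∀ p ∈ I, ∀ m : Fin n → ℕ, mhComponent m p ∈ I) :
    (∀ p : MvPolynomial (Σ j : Fin n, Fin (d j)) ℂ,
        p ∈ I ↔ ∀ x : (Σ j : Fin n, Fin (d j)) → ℂ,
          x ∈ ({x | ∀ q ∈ I, eval x q = 0} \
                ⋃ j : Fin n, {x | ∀ i : Fin (d j), x ⟨j, i⟩ = 0}) →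
            eval x p = 0)
    ↔ (I.radical = I ∧ ∀ j : Fin n,
        Submodule.colon I
          (Ideal.span (Set.range
            (fun i : Fin (d j) => (X ⟨j, i⟩ : MvPolynomial (Σ j : Fin n, Fin (d j)) ℂ)))) = I) :=
  stmt2_general d I
end

section
/- Let (P,<) be a finite poset. For every integer m ≥ 0, the number of integer points x ∈ ℤ^P lying in the dilated order polytope m·O(P,<) equals the number of weakly increasing m-tuples J_1 ⊆ J_2 ⊆ ⋯ ⊆ J_m of order ideals of (P,<). -/
open Pointwise

/-- The set of `r`-maximal elements of `J`. -/
def maxElems {P : Type*} (r : P → P → Prop) (J : Set P) : Set P :=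
  {p ∈ J | ∀ q ∈ J, ¬ r p q}

/-- The 0/1 indicator vector of `A ⊆ P`, as a point of `ℝ^P`. -/
noncomputable def ind {P : Type*} (A : Set P) : P → ℝ :=
  A.indicator 1

/-- The order ideal of `(P, r)` generated by `A`. -/
def genIdeal {P : Type*} (r : P → P → Prop) (A : Set P) : Set P :=
  {p | ∃ q ∈ A, p = q ∨ r p q}

/-- The Hibi–Li operation `J1 *' J2` relative to the order `r`: the order ideal of `(P, r)`
generated by `(J1 ∩ J2) ∩ (max_r J1 ∪ max_r J2)`. -/
def starOp {P : Type*} (r : P → P → Prop) (J1 J2 : Set P) : Set P :=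
  genIdeal r ((J1 ∩ J2) ∩ (maxElems r J1 ∪ maxElems r J2))

/-- The relative poset polytope `R(P, lt, lt')`: the convex hull of the points
`1_{max_{lt'} J}` over all order ideals `J` of `(P, lt)`. -/
noncomputable def RPP {P : Type*} (lt lt' : P → P → Prop) : Set (P → ℝ) :=
  convexHull ℝ {x | ∃ J : Set P, IsLowerIdeal lt J ∧ x = ind (maxElems lt' J)}

/-- The dilation `m·Q = {m·x : x ∈ Q}`. -/
def dilate {P : Type*} (m : ℕ) (Q : Set (P → ℝ)) : Set (P → ℝ) :=
  (fun x => (m : ℝ) • x) '' Q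

/-- The order polytope of `(P, lt)`. -/
def orderPolytope {P : Type*} (lt : P → P → Prop) : Set (P → ℝ) :=
  {x | (∀ p, 0 ≤ x p ∧ x p ≤ 1) ∧ ∀ p q, lt q p → x p ≤ x q}

/-- The chain polytope of `(P, lt)`. -/
def chainPolytope {P : Type*} (lt : P → P → Prop) : Set (P → ℝ) :=
  {x | (∀ p, 0 ≤ x p) ∧ ∀ (k : ℕ) (c : Fin k → P),
    (∀ i j : Fin k, i < j → lt (c i) (c j)) → (∑ i, x (c i)) ≤ 1}


open scoped Classical

lemma card_filter_le_val (m a : ℕ) :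
    (Finset.univ.filter fun i : Fin m => a ≤ i.val).card = m - a := by
  rw [← Nat.card_Ico a m]
  refine Finset.card_bij' (fun i _ => i.val) (fun k hk => ⟨k, (Finset.mem_Ico.1 hk).2⟩)
    ?_ ?_ ?_ ?_
  · intro i hi
    simp only [Finset.mem_filter, Finset.mem_univ, true_and] at hi
    exact Finset.mem_Ico.2 ⟨hi, i.2⟩
  · intro k hk
    simp only [Finset.mem_filter, Finset.mem_univ, true_and]
    exact (Finset.mem_Ico.1 hk).1
  · intro i hi; rfl
  · intro k hk; rfl

lemma dilate_mem_iff {P : Type*} (lt : P → P → Prop) (m : ℕ) (x : P → ℤ) :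
    ((fun p => (x p : ℝ)) ∈ dilate m (orderPolytope lt)) ↔
      ((∀ p, 0 ≤ x p ∧ x p ≤ (m : ℤ)) ∧ ∀ p q, lt q p → x p ≤ x q) := by
  constructor
  · rintro ⟨y, ⟨hy1, hy2⟩, hxy⟩
    have hx : ∀ p, (x p : ℝ) = m * y p := fun p => (congrFun hxy p).symm
    constructor
    · intro p
      have h0 : (0:ℝ) ≤ m * y p := mul_nonneg (by positivity) (hy1 p).1
      have h1 : (m:ℝ) * y p ≤ m := by
        calc (m:ℝ) * y p ≤ m * 1 :=
              mul_le_mul_of_nonneg_left (hy1 p).2 (by positivity)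
          _ = m := mul_one _
      constructor
      · exact_mod_cast (hx p) ▸ h0
      · exact_mod_cast (hx p) ▸ h1
    · intro p q hlt
      have : (m:ℝ) * y p ≤ m * y q :=
        mul_le_mul_of_nonneg_left (hy2 p q hlt) (by positivity)
      have := (hx p) ▸ (hx q) ▸ this
      exact_mod_cast this
  · rintro ⟨hb, hm⟩
    rcases Nat.eq_zero_or_pos m with rfl | hmpos
    · refine ⟨fun _ => 0, ⟨fun p => ⟨le_refl _, zero_le_one⟩, fun p q _ => le_refl _⟩, ?_⟩
      funext p
      have : x p = 0 := le_antisymm (by exact_mod_cast (hb p).2) (hb p).1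
      simp [this]
    · have hm0 : (0:ℝ) < m := by exact_mod_cast hmpos
      refine ⟨fun p => (x p : ℝ) / m, ⟨fun p => ⟨?_, ?_⟩, fun p q h => ?_⟩, ?_⟩
      · exact div_nonneg (by exact_mod_cast (hb p).1) hm0.le
      · rw [div_le_one hm0]; exact_mod_cast (hb p).2
      · exact div_le_div_of_nonneg_right (by exact_mod_cast hm p q h) hm0.le
      · funext p
        simp only [smul_eq_mul, Pi.smul_apply]
        field_simp


/-- For a finite poset `(P, lt)` and `m ≥ 0`, the number of integer points of the dilated
order polytope `m·O(P, lt)` equals the number of weakly increasing `m`-tuples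
`J_1 ⊆ ⋯ ⊆ J_m` of order ideals of `(P, lt)`. -/
theorem stmt3 {P : Type*} [Fintype P] (lt : P → P → Prop)
    (hirr : ∀ p, ¬ lt p p) (htr : ∀ a b c, lt a b → lt b c → lt a c) (m : ℕ) :
    Nat.card {x : P → ℤ // (fun p => (x p : ℝ)) ∈ dilate m (orderPolytope lt)} =
    Nat.card {J : Fin m → Set P // (∀ i, IsLowerIdeal lt (J i)) ∧ Monotone J} := by
  rw [Nat.card_congr (Equiv.subtypeEquivRight (dilate_mem_iff lt m))]
  refine Nat.card_congr ?_
  set A := {x : P → ℤ // (∀ p, 0 ≤ x p ∧ x p ≤ (m : ℤ)) ∧ ∀ p q, lt q p → x p ≤ x q}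
  set B := {J : Fin m → Set P // (∀ i, IsLowerIdeal lt (J i)) ∧ Monotone J}
  have hf : ∀ x : A, (∀ i : Fin m, IsLowerIdeal lt {p | (m : ℤ) - (i : ℕ) ≤ x.1 p}) ∧
      Monotone (fun i : Fin m => {p | (m : ℤ) - (i : ℕ) ≤ x.1 p}) := by
    intro x
    constructor
    · intro i p q hpq hq
      exact le_trans hq (x.2.2 q p hpq)
    · intro i j hij p hp
      have hij' : i.val ≤ j.val := hij
      simp only [Set.mem_setOf_eq] at hp ⊢
      omega
  have hg : ∀ J : B, (∀ p, 0 ≤ ((Finset.univ.filter fun i : Fin m => p ∈ J.1 i).card : ℤ) ∧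
        ((Finset.univ.filter fun i : Fin m => p ∈ J.1 i).card : ℤ) ≤ m) ∧
      ∀ p q, lt q p →
        ((Finset.univ.filter fun i : Fin m => p ∈ J.1 i).card : ℤ) ≤
        ((Finset.univ.filter fun i : Fin m => q ∈ J.1 i).card : ℤ) := by
    intro J
    constructor
    · intro p
      refine ⟨by positivity, ?_⟩
      exact_mod_cast (Finset.card_filter_le _ _).trans (by simp)
    · intro p q hlt
      have : (Finset.univ.filter fun i : Fin m => p ∈ J.1 i) ⊆
          (Finset.univ.filter fun i : Fin m => q ∈ J.1 i) := by
        intro i hi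
        simp only [Finset.mem_filter, Finset.mem_univ, true_and] at hi ⊢
        exact J.2.1 i hlt hi
      exact_mod_cast Finset.card_le_card this
  refine
    { toFun := fun x => ⟨fun i : Fin m => {p | (m : ℤ) - (i : ℕ) ≤ x.1 p}, hf x⟩
      invFun := fun J => ⟨fun p => ((Finset.univ.filter fun i : Fin m => p ∈ J.1 i).card : ℤ),
        hg J⟩
      left_inv := ?_
      right_inv := ?_ }
  · -- left inverse
    rintro ⟨x, hb, hmono⟩
    ext p
    simp only
    have hxb := hb p
    set n : ℕ := (x p).toNat with hn
    have hnm : n ≤ m := by omega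
    have hxn : x p = (n : ℤ) := by omega
    simp only [Set.mem_setOf_eq, Finset.filter_congr_decidable]
    have hset : (Finset.univ.filter fun i : Fin m => (m : ℤ) - (i : ℕ) ≤ x p) =
        (Finset.univ.filter fun i : Fin m => m - n ≤ i.val) := by
      apply Finset.filter_congr
      intro i _
      simp only [hxn, eq_iff_iff]
      have := i.2
      constructor <;> intro h <;> omega
    rw [Finset.filter_congr_decidable, hset, card_filter_le_val, hxn]
    congr 1
    omega
  · -- right inverse
    rintro ⟨J, hJ, hmono⟩
    ext i p
    simp only [Set.mem_setOf_eq, Finset.mem_coe]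
    constructor
    · intro h
      by_contra hp
      have hsub : (Finset.univ.filter fun j : Fin m => p ∈ J j) ⊆
          (Finset.univ.filter fun j : Fin m => i.val + 1 ≤ j.val) := by
        intro j hj
        simp only [Finset.mem_filter, Finset.mem_univ, true_and] at hj ⊢
        by_contra hji
        exact hp (hmono (Fin.le_def.2 (by omega)) hj)
      have hle := Finset.card_le_card hsub
      rw [card_filter_le_val] at hle
      have hi := i.2
      omega
    · intro hp
      have hsub : (Finset.univ.filter fun j : Fin m => i.val ≤ j.val) ⊆
          (Finset.univ.filter fun j : Fin m => p ∈ J j) := by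
        intro j hj
        simp only [Finset.mem_filter, Finset.mem_univ, true_and] at hj ⊢
        exact hmono (Fin.le_def.2 hj) hp
      have hle := Finset.card_le_card hsub
      rw [card_filter_le_val] at hle
      have hi := i.2
      omega
end

section
/- In the setup below, the relative poset polytope R(P,<,<') equals the union, over all linearizations ≺ of < (linear orders on P with p < q implying p ≺ q), of the simplices Δ_{≺,<'} = conv{1_{max_{<'} J} : J is an order ideal of (P,≺)}. -/
open Pointwise

section AuxRPP

variable {P : Type*} {lt' : P → P → Prop} {I1 I2 : Set P}

lemma maxElems_subset' (r : P → P → Prop) (J : Set P) : maxElems r J ⊆ J :=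
  fun _ hp => hp.1

lemma starOp_subset' (h1 : IsLowerIdeal lt' I1) (h2 : IsLowerIdeal lt' I2) :
    starOp lt' I1 I2 ⊆ I1 ∩ I2 := by
  rintro p ⟨q, ⟨hq12, _⟩, hpq⟩
  rcases hpq with rfl | hpq
  · exact hq12
  · exact ⟨h1 hpq hq12.1, h2 hpq hq12.2⟩

lemma mem_starOp_gen {p : P} (hp : p ∈ (I1 ∩ I2) ∩ (maxElems lt' I1 ∪ maxElems lt' I2)) :
    p ∈ starOp lt' I1 I2 := ⟨p, hp, Or.inl rfl⟩

lemma maxElems_union (h1 : IsLowerIdeal lt' I1) (h2 : IsLowerIdeal lt' I2) (p : P) :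
    p ∈ maxElems lt' (I1 ∪ I2) ↔
      p ∈ maxElems lt' I1 ∪ maxElems lt' I2 ∧ (p ∈ I1 → p ∈ maxElems lt' I1) ∧
        (p ∈ I2 → p ∈ maxElems lt' I2) := by
  constructor
  · rintro ⟨hpU, hmax⟩
    have k1 : p ∈ I1 → p ∈ maxElems lt' I1 :=
      fun h => ⟨h, fun q hq => hmax q (Or.inl hq)⟩
    have k2 : p ∈ I2 → p ∈ maxElems lt' I2 :=
      fun h => ⟨h, fun q hq => hmax q (Or.inr hq)⟩
    exact ⟨hpU.imp k1 k2, k1, k2⟩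
  · rintro ⟨hm, k1, k2⟩
    refine ⟨hm.imp (fun h => h.1) (fun h => h.1), ?_⟩
    rintro q (hq | hq) hlt
    · exact (k1 (h1 hlt hq)).2 q hq hlt
    · exact (k2 (h2 hlt hq)).2 q hq hlt

lemma maxElems_starOp (h1 : IsLowerIdeal lt' I1) (h2 : IsLowerIdeal lt' I2) (p : P) :
    p ∈ maxElems lt' (starOp lt' I1 I2) ↔
      p ∈ (maxElems lt' I1 ∩ I2) ∪ (maxElems lt' I2 ∩ I1) := by
  constructor
  · rintro ⟨hpS, hmax⟩
    obtain ⟨q, hq, hpq⟩ := hpS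
    rcases hpq with rfl | hpq
    · rcases hq.2 with h | h
      · exact Or.inl ⟨h, hq.1.2⟩
      · exact Or.inr ⟨h, hq.1.1⟩
    · exact absurd hpq (hmax q (mem_starOp_gen hq))
  · have sub := starOp_subset' h1 h2
    rintro (⟨hm, hi⟩ | ⟨hm, hi⟩)
    · refine ⟨mem_starOp_gen ⟨⟨hm.1, hi⟩, Or.inl hm⟩, fun q hq hlt => hm.2 q (sub hq).1 hlt⟩
    · refine ⟨mem_starOp_gen ⟨⟨hi, hm.1⟩, Or.inr hm⟩, fun q hq hlt => hm.2 q (sub hq).2 hlt⟩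

lemma key_identity (h1 : IsLowerIdeal lt' I1) (h2 : IsLowerIdeal lt' I2) :
    ind (maxElems lt' I1) + ind (maxElems lt' I2) =
      ind (maxElems lt' (I1 ∪ I2)) + ind (maxElems lt' (starOp lt' I1 I2)) := by
  classical
  funext p
  have e1 := maxElems_union h1 h2 p
  have e2 := maxElems_starOp h1 h2 p
  have s1 : p ∈ maxElems lt' I1 → p ∈ I1 := fun h => h.1
  have s2 : p ∈ maxElems lt' I2 → p ∈ I2 := fun h => h.1
  simp only [Pi.add_apply, ind, Set.indicator_apply, Pi.one_apply]
  by_cases hm1 : p ∈ maxElems lt' I1 <;> by_cases hm2 : p ∈ maxElems lt' I2 <;>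
    by_cases hi1 : p ∈ I1 <;> by_cases hi2 : p ∈ I2 <;>
      simp_all [e1, e2, Set.mem_union, Set.mem_inter_iff]

lemma arith_incr {a b u s e C : ℝ} (he : 0 < e) (ha : 0 < a) (hb : 0 < b)
    (h1 : a * 3 ≤ u) (h2 : b * 3 ≤ u) (hs : 0 < s) :
    C < C + e * u + e * s - e * a - e * b := by nlinarith

lemma exists_linearization {P : Type*} [Fintype P] (lt : P → P → Prop)
    (hirr : ∀ p, ¬ lt p p) (htr : ∀ a b c, lt a b → lt b c → lt a c)
    (C : Set (Set P)) (hC : ∀ J ∈ C, IsLowerIdeal lt J)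
    (hchain : ∀ J1 ∈ C, ∀ J2 ∈ C, J1 ⊆ J2 ∨ J2 ⊆ J1) :
    ∃ r : P → P → Prop,
      ((∀ p, ¬ r p p) ∧ (∀ a b c, r a b → r b c → r a c) ∧
        (∀ p q : P, p = q ∨ r p q ∨ r q p) ∧ (∀ p q, lt p q → r p q)) ∧
      ∀ J ∈ C, IsLowerIdeal r J := by
  classical
  set D : P → Set P := fun p => ⋂₀ {J | J ∈ C ∧ p ∈ J} with hD
  have hmemD : ∀ p, p ∈ D p := fun p => by
    intro J hJ; exact hJ.2
  have hDsub : ∀ p (J : Set P), J ∈ C → p ∈ J → D p ⊆ J := fun p J hJ hp =>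
    Set.sInter_subset_of_mem ⟨hJ, hp⟩
  have hcomp : ∀ p q, D p ⊆ D q ∨ D q ⊆ D p := by
    intro p q
    by_cases h : D p ⊆ D q
    · exact Or.inl h
    · right
      obtain ⟨x, hxp, hxq⟩ := Set.not_subset.mp h
      obtain ⟨J, ⟨hJC, hqJ⟩, hxJ⟩ : ∃ J ∈ {J | J ∈ C ∧ q ∈ J}, x ∉ J := by
        by_contra hc
        push_neg at hc
        exact hxq (by intro J hJ; exact hc J hJ)
      intro y hy
      intro K hK
      rcases hchain K hK.1 J hJC with hKJ | hJK
      · exact absurd (hKJ (hDsub p K hK.1 hK.2 hxp)) hxJ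
      · exact hJK (hDsub q J hJC hqJ hy)
  have hltD : ∀ p q, lt p q → D p ⊆ D q := by
    intro p q hpq
    intro y hy
    intro J hJ
    exact hy J ⟨hJ.1, hC J hJ.1 hpq hJ.2⟩
  set h : P → ℕ := fun p => (D p).ncard with hh
  have hmono : ∀ p q, D p ⊆ D q → h p ≤ h q := fun p q hs =>
    Set.ncard_le_ncard hs (Set.toFinite _)
  have hle_sub : ∀ p q, h p ≤ h q → D p ⊆ D q := by
    intro p q hle
    rcases hcomp p q with h1 | h1
    · exact h1
    · have : D q = D p := Set.eq_of_subset_of_ncard_le h1 hle (Set.toFinite _)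
      exact this.ge
  set s : P → P → Prop := fun p q => h p < h q ∨ (h p = h q ∧ lt p q) with hs
  have hsirr : ∀ p, ¬ s p p := by
    rintro p (h1 | ⟨_, h2⟩)
    · exact lt_irrefl _ h1
    · exact hirr p h2
  have hstr : ∀ a b c, s a b → s b c → s a c := by
    rintro a b c (h1 | ⟨h1, h1'⟩) (h2 | ⟨h2, h2'⟩)
    · exact Or.inl (h1.trans h2)
    · exact Or.inl (h2 ▸ h1)
    · exact Or.inl (h1 ▸ h2)
    · exact Or.inr ⟨h1.trans h2, htr _ _ _ h1' h2'⟩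
  have hsasymm : ∀ p q, s p q → s q p → False := by
    rintro p q (h1 | ⟨h1, h1'⟩) (h2 | ⟨h2, h2'⟩)
    · exact absurd (h1.trans h2) (lt_irrefl _)
    · exact absurd (h2 ▸ h1) (lt_irrefl _)
    · exact absurd (h1 ▸ h2) (lt_irrefl _)
    · exact hirr p (htr _ _ _ h1' h2')
  have hlts : ∀ p q, lt p q → s p q := by
    intro p q hpq
    rcases lt_or_eq_of_le (hmono p q (hltD p q hpq)) with h1 | h1
    · exact Or.inl h1
    · exact Or.inr ⟨h1, hpq⟩
  set r0 : P → P → Prop := fun p q => s p q ∨ p = q with hr0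
  haveI : IsPartialOrder P r0 :=
    { refl := fun a => Or.inr rfl
      trans := by
        rintro a b c (h1 | rfl) (h2 | rfl)
        · exact Or.inl (hstr _ _ _ h1 h2)
        · exact Or.inl h1
        · exact Or.inl h2
        · exact Or.inr rfl
      antisymm := by
        rintro a b (h1 | rfl) (h2 | h2)
        · exact absurd h2 (fun h2 => hsasymm _ _ h1 h2)
        · exact h2.symm
        · rfl
        · rfl }
  obtain ⟨L, hL, hr0L⟩ := extend_partialOrder r0
  set r : P → P → Prop := fun p q => L p q ∧ p ≠ q with hr
  have hLtot := hL.total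
  have hLantisymm := hL.antisymm
  have hLtrans := hL.trans
  have hsr : ∀ p q, s p q → r p q := by
    intro p q hpq
    refine ⟨hr0L p q (Or.inl hpq), ?_⟩
    rintro rfl; exact hsirr p hpq
  refine ⟨r, ⟨fun p hp => hp.2 rfl, ?_, ?_, fun p q hpq => hsr p q (hlts p q hpq)⟩, ?_⟩
  · rintro a b c ⟨h1, h1'⟩ ⟨h2, h2'⟩
    refine ⟨hLtrans _ _ _ h1 h2, ?_⟩
    rintro rfl
    exact h1' (hLantisymm _ _ h1 h2)
  · intro p q
    by_cases hpq : p = q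
    · exact Or.inl hpq
    · rcases hLtot p q with h1 | h1
      · exact Or.inr (Or.inl ⟨h1, hpq⟩)
      · exact Or.inr (Or.inr ⟨h1, fun h => hpq h.symm⟩)
  · intro J hJ p q hpq hq
    have hhle : h p ≤ h q := by
      by_contra hgt
      push_neg at hgt
      have : s q p := Or.inl hgt
      exact hpq.2 (hLantisymm _ _ hpq.1 (hr0L q p (Or.inl this)))
    exact ((hle_sub p q hhle).trans (hDsub q J hJ hq)) (hmemD p)

end AuxRPP

/-- The relative poset polytope `R(P, lt, lt')` is the union, over all linearizations `r`
of `lt`, of the simplices `Δ_{r, lt'} = conv{1_{max_{lt'} J} : J an order ideal of (P, r)}`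
(which is exactly `RPP r lt'`). -/
theorem stmt4 {P : Type*} [Fintype P] (lt lt' : P → P → Prop)
    (hltirr : ∀ p, ¬ lt p p) (hlttr : ∀ a b c, lt a b → lt b c → lt a c)
    (hlt'irr : ∀ p, ¬ lt' p p) (hlt'tr : ∀ a b c, lt' a b → lt' b c → lt' a c)
    (hweak : ∀ p q, lt' p q → lt p q)
    (hstar : ∀ J1 J2 : Set P, IsLowerIdeal lt J1 → IsLowerIdeal lt J2 →
      IsLowerIdeal lt (starOp lt' J1 J2)) :
    RPP lt lt' =
      {x | ∃ r : P → P → Prop,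
        ((∀ p, ¬ r p p) ∧ (∀ a b c, r a b → r b c → r a c) ∧
          (∀ p q : P, p = q ∨ r p q ∨ r q p) ∧
          (∀ p q, lt p q → r p q)) ∧
        x ∈ RPP r lt'} := by
  classical
  haveI : Fintype (Set P) := Fintype.ofFinite _
  set v : Set P → (P → ℝ) := fun J => ind (maxElems lt' J) with hv
  ext x
  simp only [Set.mem_setOf_eq]
  constructor
  · intro hx
    -- Step A: obtain weights on ideals
    set F : Finset (Set P) := Finset.univ.filter (fun J => IsLowerIdeal lt J) with hF
    set T : Finset (P → ℝ) := F.image v with hT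
    have hVT : {y | ∃ J : Set P, IsLowerIdeal lt J ∧ y = ind (maxElems lt' J)} = ↑T := by
      ext y
      simp only [Set.mem_setOf_eq, hT, Finset.coe_image, Set.mem_image, Finset.mem_coe,
        hF, Finset.mem_filter, Finset.mem_univ, true_and]
      constructor
      · rintro ⟨J, hJ, rfl⟩; exact ⟨J, hJ, rfl⟩
      · rintro ⟨J, hJ, rfl⟩; exact ⟨J, hJ, rfl⟩
    rw [RPP, hVT, Finset.convexHull_eq] at hx
    obtain ⟨w, hw0, hw1, hwx⟩ := hx
    rw [Finset.centerMass_eq_of_sum_1 _ _ hw1] at hwx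
    set g : (P → ℝ) → Set P := fun y =>
      if hy : ∃ J, IsLowerIdeal lt J ∧ v J = y then hy.choose else ∅ with hg0
    have hg : ∀ y ∈ T, IsLowerIdeal lt (g y) ∧ v (g y) = y := by
      intro y hy
      obtain ⟨J, hJF, hJy⟩ := Finset.mem_image.mp hy
      have hex : ∃ J, IsLowerIdeal lt J ∧ v J = y :=
        ⟨J, (Finset.mem_filter.mp hJF).2, hJy⟩
      simp only [hg0, dif_pos hex]
      exact hex.choose_spec
    set w' : Set P → ℝ := fun J => ∑ y ∈ T.filter (fun y => g y = J), w y with hw'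
    set W : Set (Set P → ℝ) := {u | (∀ J, 0 ≤ u J) ∧ (∀ J, u J ≠ 0 → IsLowerIdeal lt J) ∧
      (∑ J : Set P, u J) = 1 ∧ (∑ J : Set P, u J • v J) = x} with hW
    have hw'W : w' ∈ W := by
      refine ⟨?_, ?_, ?_, ?_⟩
      · intro J
        exact Finset.sum_nonneg fun y hy => hw0 y (Finset.mem_filter.mp hy).1
      · intro J hJ
        obtain ⟨y, hy, -⟩ := Finset.exists_ne_zero_of_sum_ne_zero hJ
        obtain ⟨hyT, hgy⟩ := Finset.mem_filter.mp hy
        exact hgy ▸ (hg y hyT).1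
      · rw [hw']
        rw [Finset.sum_fiberwise T g w]
        exact hw1
      · have hterm : ∀ J : Set P, w' J • v J = ∑ y ∈ T.filter (fun y => g y = J), w y • y := by
          intro J
          rw [hw', Finset.sum_smul]
          refine Finset.sum_congr rfl fun y hy => ?_
          obtain ⟨hyT, hgy⟩ := Finset.mem_filter.mp hy
          rw [← hgy, (hg y hyT).2]
        calc (∑ J : Set P, w' J • v J)
            = ∑ J : Set P, ∑ y ∈ T.filter (fun y => g y = J), w y • y := by
              exact Finset.sum_congr rfl fun J _ => hterm J
          _ = ∑ y ∈ T, w y • y := Finset.sum_fiberwise T g _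
          _ = x := by simpa using hwx
    -- Step B: W compact
    have hWclosed : IsClosed W := by
      have hA : IsClosed {u : Set P → ℝ | ∀ J, 0 ≤ u J} := by
        have : {u : Set P → ℝ | ∀ J, 0 ≤ u J} = ⋂ J : Set P, {u | 0 ≤ u J} := by
          ext u; simp
        rw [this]
        exact isClosed_iInter fun J => isClosed_le continuous_const (continuous_apply J)
      have hB : IsClosed {u : Set P → ℝ | ∀ J, u J ≠ 0 → IsLowerIdeal lt J} := by
        have : {u : Set P → ℝ | ∀ J, u J ≠ 0 → IsLowerIdeal lt J} =
            ⋂ J : Set P, {u | u J ≠ 0 → IsLowerIdeal lt J} := by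
          ext u; simp
        rw [this]
        refine isClosed_iInter fun J => ?_
        by_cases hJ : IsLowerIdeal lt J
        · have : {u : Set P → ℝ | u J ≠ 0 → IsLowerIdeal lt J} = Set.univ := by
            ext u; simp [hJ]
          rw [this]; exact isClosed_univ
        · have : {u : Set P → ℝ | u J ≠ 0 → IsLowerIdeal lt J} = {u | u J = 0} := by
            ext u; simp [hJ]
          rw [this]
          exact isClosed_eq (continuous_apply J) continuous_const
      have hC : IsClosed {u : Set P → ℝ | (∑ J : Set P, u J) = 1} :=
        isClosed_eq (by exact continuous_finset_sum _ fun J _ => continuous_apply J)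
          continuous_const
      have hD : IsClosed {u : Set P → ℝ | (∑ J : Set P, u J • v J) = x} :=
        isClosed_eq (by exact continuous_finset_sum _ fun J _ =>
          (continuous_apply J).smul continuous_const) continuous_const
      exact hA.inter (hB.inter (hC.inter hD))
    have hWsub : W ⊆ Set.Icc 0 1 := by
      rintro u ⟨h1, h2, h3, h4⟩
      constructor
      · intro J; exact h1 J
      · intro J
        have := Finset.single_le_sum (f := u) (fun i _ => h1 i) (Finset.mem_univ J)
        rw [h3] at this
        exact this
    have hWcp : IsCompact W := IsCompact.of_isClosed_subset isCompact_Icc hWclosed hWsub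
    -- Step C: maximize Φ
    set Φ : (Set P → ℝ) → ℝ := fun u => ∑ J : Set P, u J * (3 : ℝ) ^ (J.ncard) with hΦdef
    have hΦcont : Continuous Φ :=
      continuous_finset_sum _ fun J _ => (continuous_apply J).mul continuous_const
    obtain ⟨w0, hw0W, hmax⟩ := hWcp.exists_isMaxOn ⟨w', hw'W⟩ hΦcont.continuousOn
    obtain ⟨hpos, hsupp, hsum, hcomb⟩ := hw0W
    -- Step D: support of w0 is a chain
    have hchain : ∀ J1, w0 J1 ≠ 0 → ∀ J2, w0 J2 ≠ 0 → J1 ⊆ J2 ∨ J2 ⊆ J1 := by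
      intro J1 hJ1 J2 hJ2
      by_contra hcon
      push_neg at hcon
      obtain ⟨h12, h21⟩ := hcon
      have hI1 : IsLowerIdeal lt J1 := hsupp J1 hJ1
      have hI2 : IsLowerIdeal lt J2 := hsupp J2 hJ2
      have hI1' : IsLowerIdeal lt' J1 := fun p q hpq hq => hI1 (hweak p q hpq) hq
      have hI2' : IsLowerIdeal lt' J2 := fun p q hpq hq => hI2 (hweak p q hpq) hq
      set U : Set P := J1 ∪ J2 with hUdef
      set S : Set P := starOp lt' J1 J2 with hSdef
      have hSsub : S ⊆ J1 ∩ J2 := starOp_subset' hI1' hI2'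
      have hU1 : U ≠ J1 := fun h => h21 (Set.union_eq_left.mp h)
      have hU2 : U ≠ J2 := fun h => h12 (Set.union_eq_right.mp h)
      have hS1 : S ≠ J1 := fun h =>
        h12 (h ▸ (hSsub.trans Set.inter_subset_right))
      have hS2 : S ≠ J2 := fun h =>
        h21 (h ▸ (hSsub.trans Set.inter_subset_left))
      have hSU : S ≠ U := fun h =>
        h21 ((Set.subset_union_right.trans h.symm.subset).trans
          (hSsub.trans Set.inter_subset_left))
      have hJ12 : J1 ≠ J2 := fun h => h12 h.subset
      set ε : ℝ := min (w0 J1) (w0 J2) with hεdef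
      have hε : 0 < ε :=
        lt_min (lt_of_le_of_ne (hpos J1) (Ne.symm hJ1)) (lt_of_le_of_ne (hpos J2) (Ne.symm hJ2))
      set δ : Set P → Set P → ℝ := fun A K => if K = A then (1 : ℝ) else 0 with hδdef
      set w1 : Set P → ℝ := fun K =>
        w0 K + ε * δ U K + ε * δ S K - ε * δ J1 K - ε * δ J2 K with hw1def
      have hδsum : ∀ A : Set P, (∑ K : Set P, ε * δ A K) = ε := by
        intro A
        simp [hδdef, Finset.sum_ite_eq', mul_ite]
      have hδsmul : ∀ A : Set P, (∑ K : Set P, (ε * δ A K) • v K) = ε • v A := by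
        intro A
        rw [Finset.sum_eq_single A]
        · simp [hδdef]
        · intro b _ hb; simp [hδdef, hb]
        · simp
      have hδΦ : ∀ A : Set P, (∑ K : Set P, (ε * δ A K) * (3 : ℝ) ^ (K.ncard))
          = ε * (3 : ℝ) ^ (A.ncard) := by
        intro A
        rw [Finset.sum_eq_single A]
        · simp [hδdef]
        · intro b _ hb; simp [hδdef, hb]
        · simp
      have hw1eval : ∀ K : Set P, w1 K = w0 K + (if K = U then ε else 0)
          + (if K = S then ε else 0) - (if K = J1 then ε else 0)
          - (if K = J2 then ε else 0) := by
        intro K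
        simp [hw1def, hδdef, mul_ite, mul_one, mul_zero]
      have hw1W : w1 ∈ W := by
        refine ⟨?_, ?_, ?_, ?_⟩
        · intro K
          by_cases hK1 : K = J1
          · have h2 : K ≠ J2 := by rw [hK1]; exact hJ12
            have h3 : K ≠ U := by rw [hK1]; exact Ne.symm hU1
            have h4 : K ≠ S := by rw [hK1]; exact Ne.symm hS1
            rw [hw1eval, if_neg h3, if_neg h4, if_pos hK1, if_neg h2, hK1]
            have := min_le_left (w0 J1) (w0 J2)
            have hεle : ε ≤ w0 J1 := this
            linarith
          by_cases hK2 : K = J2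
          · have h3 : K ≠ U := by rw [hK2]; exact Ne.symm hU2
            have h4 : K ≠ S := by rw [hK2]; exact Ne.symm hS2
            rw [hw1eval, if_neg h3, if_neg h4, if_neg hK1, if_pos hK2, hK2]
            have hεle : ε ≤ w0 J2 := min_le_right (w0 J1) (w0 J2)
            linarith
          by_cases hKU : K = U
          · have h4 : K ≠ S := by rw [hKU]; exact Ne.symm hSU
            rw [hw1eval, if_pos hKU, if_neg h4, if_neg hK1, if_neg hK2]
            have := hpos K
            linarith
          by_cases hKS : K = S
          · rw [hw1eval, if_neg hKU, if_pos hKS, if_neg hK1, if_neg hK2]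
            have := hpos K
            linarith
          · rw [hw1eval, if_neg hKU, if_neg hKS, if_neg hK1, if_neg hK2]
            have := hpos K
            linarith
        · intro K hK
          by_cases hK1 : K = J1
          · rw [hK1]; exact hI1
          by_cases hK2 : K = J2
          · rw [hK2]; exact hI2
          by_cases hKU : K = U
          · rw [hKU, hUdef]
            exact fun p q hpq hq => hq.imp (fun h => hI1 hpq h) (fun h => hI2 hpq h)
          by_cases hKS : K = S
          · rw [hKS, hSdef]
            exact hstar J1 J2 hI1 hI2
          · refine hsupp K ?_
            intro h0
            apply hK
            rw [hw1eval, if_neg hKU, if_neg hKS, if_neg hK1, if_neg hK2, h0]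
            ring
        · have : (∑ K : Set P, w1 K) = (∑ K : Set P, w0 K)
              + (∑ K : Set P, ε * δ U K) + (∑ K : Set P, ε * δ S K)
              - (∑ K : Set P, ε * δ J1 K) - (∑ K : Set P, ε * δ J2 K) := by
            rw [← Finset.sum_add_distrib, ← Finset.sum_add_distrib,
              ← Finset.sum_sub_distrib, ← Finset.sum_sub_distrib]
          rw [this, hδsum, hδsum, hδsum, hδsum, hsum]
          ring
        · have hexp : (∑ K : Set P, w1 K • v K) = (∑ K : Set P, w0 K • v K)
              + (∑ K : Set P, (ε * δ U K) • v K) + (∑ K : Set P, (ε * δ S K) • v K)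
              - (∑ K : Set P, (ε * δ J1 K) • v K) - (∑ K : Set P, (ε * δ J2 K) • v K) := by
            rw [← Finset.sum_add_distrib, ← Finset.sum_add_distrib,
              ← Finset.sum_sub_distrib, ← Finset.sum_sub_distrib]
            refine Finset.sum_congr rfl fun K _ => ?_
            simp only [hw1def]
            module
          rw [hexp, hδsmul, hδsmul, hδsmul, hδsmul, hcomb]
          have hid : v J1 + v J2 = v U + v S := key_identity hI1' hI2'
          have h2 : ε • v U + ε • v S = ε • v J1 + ε • v J2 := by
            rw [← smul_add, ← smul_add, ← hid]
          have h3 : x + ε • v U + ε • v S - ε • v J1 - ε • v J2 =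
              x + ((ε • v U + ε • v S) - (ε • v J1 + ε • v J2)) := by abel
          rw [h3, h2, sub_self, add_zero]
      -- Φ strictly increases
      have hΦ1 : Φ w1 = Φ w0 + ε * (3 : ℝ) ^ (U.ncard) + ε * (3 : ℝ) ^ (S.ncard)
          - ε * (3 : ℝ) ^ (J1.ncard) - ε * (3 : ℝ) ^ (J2.ncard) := by
        have : Φ w1 = (∑ K : Set P, w0 K * (3:ℝ) ^ K.ncard)
            + (∑ K : Set P, (ε * δ U K) * (3:ℝ) ^ K.ncard)
            + (∑ K : Set P, (ε * δ S K) * (3:ℝ) ^ K.ncard)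
            - (∑ K : Set P, (ε * δ J1 K) * (3:ℝ) ^ K.ncard)
            - (∑ K : Set P, (ε * δ J2 K) * (3:ℝ) ^ K.ncard) := by
          rw [hΦdef]
          simp only []
          rw [← Finset.sum_add_distrib, ← Finset.sum_add_distrib,
            ← Finset.sum_sub_distrib, ← Finset.sum_sub_distrib]
          refine Finset.sum_congr rfl fun K _ => ?_
          simp only [hw1def]
          ring
        rw [this, hδΦ, hδΦ, hδΦ, hδΦ]
      have hc1 : J1.ncard < U.ncard :=
        Set.ncard_lt_ncard ⟨Set.subset_union_left,
          fun h => h21 ((Set.union_subset_iff.mp h).2)⟩ (Set.toFinite _)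
      have hc2 : J2.ncard < U.ncard :=
        Set.ncard_lt_ncard ⟨Set.subset_union_right,
          fun h => h12 ((Set.union_subset_iff.mp h).1)⟩ (Set.toFinite _)
      have hp1 : (3 : ℝ) ^ (J1.ncard) * 3 ≤ (3 : ℝ) ^ (U.ncard) := by
        calc (3 : ℝ) ^ (J1.ncard) * 3 = 3 ^ (J1.ncard + 1) := by rw [pow_succ]
          _ ≤ (3 : ℝ) ^ (U.ncard) := by
              exact pow_le_pow_right₀ (by norm_num) hc1
      have hp2 : (3 : ℝ) ^ (J2.ncard) * 3 ≤ (3 : ℝ) ^ (U.ncard) := by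
        calc (3 : ℝ) ^ (J2.ncard) * 3 = 3 ^ (J2.ncard + 1) := by rw [pow_succ]
          _ ≤ (3 : ℝ) ^ (U.ncard) := by
              exact pow_le_pow_right₀ (by norm_num) hc2
      have hspos : (0 : ℝ) < (3 : ℝ) ^ (S.ncard) := by positivity
      have hΦlt : Φ w0 < Φ w1 := by
        rw [hΦ1]
        exact arith_incr hε (by positivity) (by positivity) hp1 hp2 hspos
      exact absurd (hmax hw1W) (not_le.mpr hΦlt)
    -- Step E: conclude
    obtain ⟨r, hrprops, hrid⟩ := exists_linearization lt hltirr hlttr {J | w0 J ≠ 0}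
      (fun J hJ => hsupp J hJ) (fun J1 h1 J2 h2 => hchain J1 h1 J2 h2)
    refine ⟨r, hrprops, ?_⟩
    set F0 : Finset (Set P) := Finset.univ.filter (fun K => w0 K ≠ 0) with hF0
    have hsum' : (∑ K ∈ F0, w0 K) = 1 := by
      rw [hF0, Finset.sum_filter_ne_zero]
      exact hsum
    have hx' : (∑ K ∈ F0, w0 K • v K) = x := by
      rw [← hcomb]
      refine Finset.sum_subset (Finset.filter_subset _ _) fun K _ hK => ?_
      have : w0 K = 0 := by
        by_contra h0
        exact hK (Finset.mem_filter.mpr ⟨Finset.mem_univ K, h0⟩)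
      rw [this, zero_smul]
    rw [RPP]
    have hmem := Finset.centerMass_mem_convexHull (R := ℝ)
      (s := {y | ∃ J : Set P, IsLowerIdeal r J ∧ y = ind (maxElems lt' J)}) F0 (w := w0)
      (fun i _ => hpos i) (by rw [hsum']; norm_num) (z := v)
      (fun K hK => ⟨K, hrid K (Finset.mem_filter.mp hK).2, rfl⟩)
    rwa [Finset.centerMass_eq_of_sum_1 _ _ hsum', hx'] at hmem
  · rintro ⟨r, ⟨_, _, _, hrext⟩, hxr⟩
    refine convexHull_mono ?_ hxr
    rintro y ⟨J, hJ, rfl⟩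
    exact ⟨J, fun p q hpq hq => hJ (hrext p q hpq) hq, rfl⟩
end

section
/- In the setup below, the relative poset polytope R(P,<,<') is normal: for every integer k ≥ 1, every x ∈ ℤ^P with x ∈ k·R(P,<,<') can be written as x = y_1 + ⋯ + y_k where each y_i is an integer point of R(P,<,<') (y_i ∈ ℤ^P and y_i ∈ R(P,<,<')). -/
open Pointwise

/-!
Write `x / k` as a convex combination of affinely independent vertices (Carathéodory). Its
barycentric coordinates are rational, so clearing a common denominator `N` yields a multiset of
`N * k` order ideals whose vertices sum to `N • x`. The exchange identity
`1_{max J₁} + 1_{max J₂} = 1_{max (J₁ ∪ J₂)} + 1_{max (J₁ *' J₂)}` sorts this multiset into a chain.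
For a chain with multiplicities `h q = #{J | q ∈ J}` the vertex sum at `p` is
`h p - max_{p <' q} h q`; as this equals `N * x p`, induction downwards along `<'` shows `N ∣ h`,
and the `k` layers `{q | i < h q / N}` are order ideals whose vertices sum to `x`.
-/

theorem Multiset.countP_le_countP_of_imp {α : Type*} {M : Multiset α} {p q : α → Prop}
    [DecidablePred p] [DecidablePred q] (h : ∀ a ∈ M, p a → q a) : M.countP p ≤ M.countP q := by
  induction M using Quotient.inductionOn
  exact List.countP_mono_left (by simpa using h)

namespace IsLowerIdeal

variable {P : Type*} {r : P → P → Prop} {J₁ J₂ : Set P}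

theorem of_le {r' : P → P → Prop} (h : ∀ p q, r' p q → r p q) {J : Set P}
    (hJ : IsLowerIdeal r J) : IsLowerIdeal r' J :=
  fun _ _ hpq hq => hJ (h _ _ hpq) hq

theorem union (h₁ : IsLowerIdeal r J₁) (h₂ : IsLowerIdeal r J₂) : IsLowerIdeal r (J₁ ∪ J₂) :=
  fun _ _ hpq => Or.imp (h₁ hpq) (h₂ hpq)

theorem starOp_subset_inter (h₁ : IsLowerIdeal r J₁) (h₂ : IsLowerIdeal r J₂) :
    starOp r J₁ J₂ ⊆ J₁ ∩ J₂ := by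
  rintro p ⟨q, hq, rfl | hpq⟩
  · exact hq.1
  · exact ⟨h₁ hpq hq.1.1, h₂ hpq hq.1.2⟩

theorem maxElems_starOp (h₁ : IsLowerIdeal r J₁) (h₂ : IsLowerIdeal r J₂) :
    maxElems r (starOp r J₁ J₂) = J₁ ∩ J₂ ∩ (maxElems r J₁ ∪ maxElems r J₂) := by
  ext p
  constructor
  · rintro ⟨⟨q, hq, rfl | hpq⟩, hmax⟩
    · exact hq
    · exact absurd hpq (hmax q ⟨q, hq, Or.inl rfl⟩)
  · intro hp
    refine ⟨⟨p, hp, Or.inl rfl⟩, fun q hq hpq => ?_⟩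
    obtain ⟨hq₁, hq₂⟩ := starOp_subset_inter h₁ h₂ hq
    rcases hp.2 with hm | hm
    exacts [hm.2 q hq₁ hpq, hm.2 q hq₂ hpq]

theorem mem_maxElems_union (h₁ : IsLowerIdeal r J₁) (h₂ : IsLowerIdeal r J₂) {p : P} :
    p ∈ maxElems r (J₁ ∪ J₂) ↔
      p ∈ J₁ ∪ J₂ ∧ (p ∈ J₁ → p ∈ maxElems r J₁) ∧ (p ∈ J₂ → p ∈ maxElems r J₂) := by
  constructor
  · rintro ⟨hp, hmax⟩
    exact ⟨hp, fun hp₁ => ⟨hp₁, fun q hq => hmax q (.inl hq)⟩,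
      fun hp₂ => ⟨hp₂, fun q hq => hmax q (.inr hq)⟩⟩
  · rintro ⟨hp, hm₁, hm₂⟩
    refine ⟨hp, fun q hq hpq => ?_⟩
    rcases hq with hq | hq
    exacts [(hm₁ (h₁ hpq hq)).2 q hq hpq, (hm₂ (h₂ hpq hq)).2 q hq hpq]

theorem ind_maxElems_add_ind_maxElems (h₁ : IsLowerIdeal r J₁) (h₂ : IsLowerIdeal r J₂) :
    ind (maxElems r J₁) + ind (maxElems r J₂) =
      ind (maxElems r (J₁ ∪ J₂)) + ind (maxElems r (starOp r J₁ J₂)) := by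
  classical
  ext p
  have hm₁ : p ∈ maxElems r J₁ → p ∈ J₁ := And.left
  have hm₂ : p ∈ maxElems r J₂ → p ∈ J₂ := And.left
  simp only [Pi.add_apply, ind, Set.indicator_apply, mem_maxElems_union h₁ h₂,
    maxElems_starOp h₁ h₂, Set.mem_inter_iff, Set.mem_union, Pi.one_apply]
  by_cases p ∈ J₁ <;> by_cases p ∈ J₂ <;> by_cases p ∈ maxElems r J₁ <;>
    by_cases p ∈ maxElems r J₂ <;> simp_all

end IsLowerIdeal

noncomputable def vertexSum {P : Type*} (r : P → P → Prop) (M : Multiset (Set P)) : P → ℝ :=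
  (M.map fun J => ind (maxElems r J)).sum

section Sorting

variable {P : Type*} {lt lt' : P → P → Prop}

theorem two_pow_ncard_add_lt [Finite P] {J₁ J₂ : Set P} (h₁₂ : ¬ J₁ ⊆ J₂) (h₂₁ : ¬ J₂ ⊆ J₁)
    (K : Set P) : 2 ^ J₁.ncard + 2 ^ J₂.ncard < 2 ^ (J₁ ∪ J₂).ncard + 2 ^ K.ncard := by
  have h₁ : J₁.ncard + 1 ≤ (J₁ ∪ J₂).ncard :=
    Set.ncard_lt_ncard ⟨Set.subset_union_left, fun h => h₂₁ (Set.union_subset_iff.1 h).2⟩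
  have h₂ : J₂.ncard + 1 ≤ (J₁ ∪ J₂).ncard :=
    Set.ncard_lt_ncard ⟨Set.subset_union_right, fun h => h₁₂ (Set.union_subset_iff.1 h).1⟩
  have h₁' := Nat.pow_le_pow_right two_pos h₁
  have h₂' := Nat.pow_le_pow_right two_pos h₂
  have hK : 0 < 2 ^ K.ncard := by positivity
  rw [pow_succ] at h₁' h₂'
  omega

/-- Repeatedly replacing two incomparable ideals `J₁, J₂` by `J₁ ∪ J₂` and
`J₁ *' J₂` strictly increases `∑ 2 ^ #J`, so a multiset maximising it is a chain. -/
theorem exists_chain_vertexSum_eq [Finite P] (hweak : ∀ p q, lt' p q → lt p q)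
    (hstar : ∀ J₁ J₂ : Set P, IsLowerIdeal lt J₁ → IsLowerIdeal lt J₂ →
      IsLowerIdeal lt (starOp lt' J₁ J₂))
    (M : Multiset (Set P)) (hM : ∀ J ∈ M, IsLowerIdeal lt J) :
    ∃ C : Multiset (Set P), Multiset.card C = Multiset.card M ∧ (∀ J ∈ C, IsLowerIdeal lt J) ∧
      (∀ J₁ ∈ C, ∀ J₂ ∈ C, J₁ ⊆ J₂ ∨ J₂ ⊆ J₁) ∧ vertexSum lt' C = vertexSum lt' M := by
  set S := {C : Multiset (Set P) | Multiset.card C = Multiset.card M ∧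
    (∀ J ∈ C, IsLowerIdeal lt J) ∧ vertexSum lt' C = vertexSum lt' M}
  have hS : S.Finite := (Set.finite_range fun s : Sym (Set P) (Multiset.card M) =>
    (s : Multiset (Set P))).subset fun C hC => ⟨⟨C, hC.1⟩, rfl⟩
  obtain ⟨C, ⟨hCcard, hCideal, hCsum⟩, hCmax⟩ :=
    S.exists_max_image (fun C => (C.map fun J => 2 ^ J.ncard).sum) hS ⟨M, rfl, hM, rfl⟩
  refine ⟨C, hCcard, hCideal, ?_, hCsum⟩
  by_contra! ⟨J₁, hJ₁, J₂, hJ₂, h₁₂, h₂₁⟩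
  have hJ₂' : J₂ ∈ C.erase J₁ := (Multiset.mem_erase_of_ne (by rintro rfl; simp at h₁₂)).2 hJ₂
  obtain ⟨C₀, rfl⟩ : ∃ C₀, C = J₁ ::ₘ J₂ ::ₘ C₀ :=
    ⟨_, by rw [Multiset.cons_erase hJ₂', Multiset.cons_erase hJ₁]⟩
  have hideal₁ := hCideal J₁ (by simp)
  have hideal₂ := hCideal J₂ (by simp)
  have hexchange : (J₁ ∪ J₂) ::ₘ starOp lt' J₁ J₂ ::ₘ C₀ ∈ S := by
    refine ⟨by simpa using hCcard, ?_, ?_⟩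
    · simp only [Multiset.mem_cons]
      rintro J (rfl | rfl | hJ)
      exacts [hideal₁.union hideal₂, hstar J₁ J₂ hideal₁ hideal₂, hCideal J (by simp [hJ])]
    · rw [← hCsum]
      simp only [vertexSum, Multiset.map_cons, Multiset.sum_cons, ← add_assoc,
        (hideal₁.of_le hweak).ind_maxElems_add_ind_maxElems (hideal₂.of_le hweak)]
  have hle := hCmax _ hexchange
  have hlt := two_pow_ncard_add_lt h₁₂ h₂₁ (starOp lt' J₁ J₂)
  simp only [Multiset.map_cons, Multiset.sum_cons] at hle
  omega

end Sorting

section Chains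

open Classical

variable {P : Type*} {r : P → P → Prop}

noncomputable def memCount (M : Multiset (Set P)) (q : P) : ℕ :=
  M.countP (q ∈ ·)

theorem vertexSum_apply (M : Multiset (Set P)) (p : P) :
    vertexSum r M p = M.countP (p ∈ maxElems r ·) := by
  induction M using Multiset.induction_on with
  | empty => simp [vertexSum]
  | cons J M ih =>
    simp only [vertexSum] at ih
    simp [vertexSum, Multiset.countP_cons, ← ih, ind, Set.indicator_apply, add_comm]

theorem countP_exists_mem_eq_sup {M : Multiset (Set P)}
    (hM : ∀ J₁ ∈ M, ∀ J₂ ∈ M, J₁ ⊆ J₂ ∨ J₂ ⊆ J₁) (s : Finset P) :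
    M.countP (fun J => ∃ q ∈ s, q ∈ J) = s.sup (memCount M) := by
  refine le_antisymm ?_ (Finset.sup_le fun q hq =>
    Multiset.countP_le_countP_of_imp fun J _ hqJ => ⟨q, hq, hqJ⟩)
  by_cases hmeet : ∃ J ∈ M, ∃ q ∈ s, q ∈ J
  · obtain ⟨J₀, hJ₀⟩ := (M.toFinset.filter fun J => ∃ q ∈ s, q ∈ J).exists_minimal
      (by simpa [Finset.Nonempty] using hmeet)
    obtain ⟨hJ₀M, q, hqs, hqJ₀⟩ := by simpa using hJ₀.prop
    -- every member meeting `s` contains the smallest such member `J₀`, hence `q`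
    have hq : ∀ J ∈ M, (∃ q ∈ s, q ∈ J) → q ∈ J := fun J hJ hJs =>
      (hM J hJ J₀ hJ₀M).elim (fun h => hJ₀.le_of_le (by simpa [hJ] using hJs) h hqJ₀)
        (fun h => h hqJ₀)
    exact (Multiset.countP_le_countP_of_imp hq).trans (Finset.le_sup (f := memCount M) hqs)
  · rw [Multiset.countP_eq_zero.2 fun J hJ ⟨q, hq, hqJ⟩ => hmeet ⟨J, hJ, q, hq, hqJ⟩]
    exact Nat.zero_le _

theorem countP_mem_maxElems_add_countP {M : Multiset (Set P)}
    (hideal : ∀ J ∈ M, IsLowerIdeal r J) (p : P) :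
    M.countP (p ∈ maxElems r ·) + M.countP (fun J => ∃ q, r p q ∧ q ∈ J) = memCount M p := by
  induction M using Multiset.induction_on with
  | empty => simp [memCount]
  | cons J M ih =>
    have hJ : (∃ q, r p q ∧ q ∈ J) → p ∈ J := fun ⟨_, hpq, hqJ⟩ =>
      hideal J (Multiset.mem_cons_self J M) hpq hqJ
    have := ih fun J' hJ' => hideal J' (Multiset.mem_cons_of_mem hJ')
    simp only [memCount, Multiset.countP_cons] at this ⊢
    by_cases hq : ∃ q, r p q ∧ q ∈ J
    · have hmax : p ∉ maxElems r J := fun h => hq.elim fun q ⟨hpq, hqJ⟩ => h.2 q hqJ hpq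
      simp only [hmax, ↓reduceIte, add_zero, hq, hJ hq]
      omega
    · have hmax : p ∈ maxElems r J ↔ p ∈ J :=
        ⟨And.left, fun h => ⟨h, fun q hqJ hpq => hq ⟨q, hpq, hqJ⟩⟩⟩
      by_cases hp : p ∈ J <;> simp only [hmax, hp, ↓reduceIte, hq, add_zero] <;> omega

theorem countP_mem_maxElems_add_sup [Fintype P] {M : Multiset (Set P)}
    (hideal : ∀ J ∈ M, IsLowerIdeal r J) (hchain : ∀ J₁ ∈ M, ∀ J₂ ∈ M, J₁ ⊆ J₂ ∨ J₂ ⊆ J₁)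
    (p : P) :
    M.countP (p ∈ maxElems r ·) + (Finset.univ.filter (r p ·)).sup (memCount M) =
      memCount M p := by
  rw [← countP_exists_mem_eq_sup hchain, ← countP_mem_maxElems_add_countP hideal p]
  congr 2
  simp

theorem memCount_le_memCount {M : Multiset (Set P)} (hideal : ∀ J ∈ M, IsLowerIdeal r J)
    {p q : P} (hpq : r p q) : memCount M q ≤ memCount M p :=
  Multiset.countP_le_countP_of_imp fun J hJ hq => hideal J hJ hpq hq

/-- Induction downwards along `r`: `memCount M p` is `N x p` plus a maximum of multiples of
`N`. -/
theorem dvd_memCount [Fintype P] (hirr : ∀ p, ¬ r p p) (htrans : ∀ a b c, r a b → r b c → r a c)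
    {M : Multiset (Set P)} (hideal : ∀ J ∈ M, IsLowerIdeal r J)
    (hchain : ∀ J₁ ∈ M, ∀ J₂ ∈ M, J₁ ⊆ J₂ ∨ J₂ ⊆ J₁) {N : ℕ} {x : P → ℤ}
    (hsum : vertexSum r M = fun p => (N : ℝ) * x p) (p : P) : N ∣ memCount M p := by
  have : IsTrans P (flip r) := ⟨fun a b c h₁ h₂ => htrans c b a h₂ h₁⟩
  have : Std.Irrefl (flip r) := ⟨hirr⟩
  induction p using (Finite.wellFounded_of_trans_of_irrefl (flip r)).induction with
  | _ p ih =>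
  rw [← countP_mem_maxElems_add_sup hideal hchain p]
  refine dvd_add ?_ (Finset.sup_induction (dvd_zero N) (fun a ha b hb => ?_)
    fun q hq => ih q (by simpa using hq : r p q))
  · have hp := congrFun hsum p
    rw [vertexSum_apply] at hp
    exact Int.natCast_dvd_natCast.1 ⟨x p, by exact_mod_cast hp⟩
  · rcases max_choice a b with h | h <;> rw [h] <;> assumption

noncomputable def layers (h : P → ℕ) (k : ℕ) : Multiset (Set P) :=
  (Finset.range k).val.map fun i => {q | i < h q}

theorem memCount_layers {h : P → ℕ} {k : ℕ} (hk : ∀ q, h q ≤ k) : memCount (layers h k) = h := by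
  funext q
  simp only [memCount, layers, Multiset.countP_map, Set.mem_ofPred_eq]
  rw [← Finset.filter_val, ← Finset.card_def,
    show (Finset.range k).filter (· < h q) = Finset.range (h q) by
      ext; simpa using fun hi => hi.trans_le (hk q),
    Finset.card_range]

theorem isLowerIdeal_setOf_lt {h : P → ℕ} (hh : ∀ p q, r p q → h q ≤ h p) (i : ℕ) :
    IsLowerIdeal r {q | i < h q} :=
  fun p q hpq hq => lt_of_lt_of_le hq (hh p q hpq)

theorem isLowerIdeal_of_mem_layers {h : P → ℕ} (hh : ∀ p q, r p q → h q ≤ h p) {k : ℕ} :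
    ∀ J ∈ layers h k, IsLowerIdeal r J := by
  simp only [layers, Multiset.mem_map]
  rintro _ ⟨i, -, rfl⟩
  exact isLowerIdeal_setOf_lt hh i

theorem layers_chain {h : P → ℕ} {k : ℕ} :
    ∀ J₁ ∈ layers h k, ∀ J₂ ∈ layers h k, J₁ ⊆ J₂ ∨ J₂ ⊆ J₁ := by
  simp only [layers, Multiset.mem_map]
  rintro _ ⟨i, -, rfl⟩ _ ⟨j, -, rfl⟩
  rcases le_total i j with hij | hij
  exacts [.inr fun q hq => lt_of_le_of_lt hij hq, .inl fun q hq => lt_of_le_of_lt hij hq]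

theorem vertexSum_layers (h : P → ℕ) (k : ℕ) :
    vertexSum r (layers h k) = ∑ i : Fin k, ind (maxElems r {q | (i : ℕ) < h q}) := by
  rw [vertexSum, layers, Multiset.map_map, Finset.sum_map_val]
  exact (Fin.sum_univ_eq_sum_range (fun i => ind (maxElems r {q | i < h q})) k).symm

variable {lt lt' : P → P → Prop}

/-- A chain of `N * k` ideals with vertex sum `N • x` has multiplicities `N • h`; the `k`
layers of `h` then have vertex sum `x`. -/
theorem exists_layers_vertexSum_eq [Fintype P] (hlt'irr : ∀ p, ¬ lt' p p)
    (hlt'tr : ∀ a b c, lt' a b → lt' b c → lt' a c) (hweak : ∀ p q, lt' p q → lt p q)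
    {C : Multiset (Set P)} (hideal : ∀ J ∈ C, IsLowerIdeal lt J)
    (hchain : ∀ J₁ ∈ C, ∀ J₂ ∈ C, J₁ ⊆ J₂ ∨ J₂ ⊆ J₁) {N k : ℕ} (hN : 0 < N)
    (hcard : Multiset.card C = N * k) {x : P → ℤ}
    (hsum : vertexSum lt' C = fun p => (N : ℝ) * x p) :
    ∃ h : P → ℕ, (∀ p q, lt p q → h q ≤ h p) ∧ (∀ q, h q ≤ k) ∧
      vertexSum lt' (layers h k) = fun p => (x p : ℝ) := by
  have hideal' : ∀ J ∈ C, IsLowerIdeal lt' J := fun J hJ => (hideal J hJ).of_le hweak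
  set h := fun q => memCount C q / N
  have hmul : ∀ q, N * h q = memCount C q := fun q =>
    Nat.mul_div_cancel' (dvd_memCount hlt'irr hlt'tr hideal' hchain hsum q)
  have hk : ∀ q, h q ≤ k := fun q =>
    Nat.div_le_of_le_mul (hcard ▸ Multiset.countP_le_card _ _)
  have hanti : ∀ p q, lt p q → h q ≤ h p := fun p q hpq =>
    Nat.div_le_div_right (memCount_le_memCount hideal hpq)
  refine ⟨h, hanti, hk, funext fun p => ?_⟩
  have hC := countP_mem_maxElems_add_sup hideal' hchain p
  have hL := countP_mem_maxElems_add_sup (r := lt')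
    (isLowerIdeal_of_mem_layers (k := k) fun p q hpq => hanti p q (hweak p q hpq)) layers_chain p
  rw [memCount_layers hk] at hL
  have hsup : (Finset.univ.filter (lt' p ·)).sup (memCount C) =
      N * (Finset.univ.filter (lt' p ·)).sup h := by
    rw [Finset.mul_sup₀]
    exact congrArg _ (funext fun q => (hmul q).symm)
  have hcount : C.countP (p ∈ maxElems lt' ·) =
      N * (layers h k).countP (p ∈ maxElems lt' ·) := by
    rw [hsup, ← hmul p, ← hL, mul_add] at hC
    omega
  have hp := congrFun hsum p
  rw [vertexSum_apply, hcount, Nat.cast_mul] at hp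
  rw [vertexSum_apply]
  exact mul_left_cancel₀ (by positivity) hp

end Chains

open Matrix in
theorem Matrix.exists_eq_comp_of_mulVec_eq {K L m n : Type*} [Field K] [Field L] [Fintype m]
    [Fintype n] (f : K →+* L) (A : Matrix m n K) (hA : Function.Injective (A.map f).mulVec)
    {w : n → L} {b : m → K} (h : A.map f *ᵥ w = f ∘ b) : ∃ q : n → K, w = f ∘ q := by
  classical
  have hker : LinearMap.ker (Matrix.toLin' A) = ⊥ := by
    refine LinearMap.ker_eq_bot.2 fun c c' hcc' => funext fun j => f.injective ?_
    have : A.map f *ᵥ (f ∘ c) = A.map f *ᵥ (f ∘ c') := funext fun i => by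
      rw [← RingHom.map_mulVec, ← RingHom.map_mulVec]
      exact congrArg f (congrFun hcc' i)
    exact congrFun (hA this) j
  obtain ⟨g, hg⟩ := (Matrix.toLin' A).exists_leftInverse_of_injective hker
  have hGA : LinearMap.toMatrix' g * A = 1 := by
    rw [← LinearMap.toMatrix'_toLin' A, ← LinearMap.toMatrix'_comp, hg, LinearMap.toMatrix'_id]
  refine ⟨LinearMap.toMatrix' g *ᵥ b, ?_⟩
  calc w = ((LinearMap.toMatrix' g * A).map f) *ᵥ w := by simp [hGA]
    _ = (LinearMap.toMatrix' g).map f *ᵥ (f ∘ b) := by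
      rw [Matrix.map_mul, ← Matrix.mulVec_mulVec, h]
    _ = f ∘ (LinearMap.toMatrix' g *ᵥ b) := funext fun i => (RingHom.map_mulVec ..).symm

open Matrix in
/-- Homogenise the points to the columns `(1, z i)` of a matrix over `K` that is injective
over `L`. -/
theorem AffineIndependent.exists_eq_comp_of_sum_smul_eq {K L ι P : Type*} [Field K] [Field L]
    [Fintype ι] [Fintype P] (f : K →+* L) {z : ι → P → K}
    (hz : AffineIndependent L fun i p => f (z i p)) {w : ι → L} (hw : ∑ i, w i = 1) {b : P → K}
    (hb : ∑ i, w i • (fun p => f (z i p)) = fun p => f (b p)) : ∃ q : ι → K, w = f ∘ q := by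
  let A : Matrix (Option P) ι K := Matrix.of fun o i => o.elim 1 (z i)
  have hmulVec (c : ι → L) : A.map f *ᵥ c =
      fun o => o.elim (∑ i, c i) (∑ i, c i • fun p => f (z i p)) := by
    funext o
    cases o <;> simp [A, Matrix.mulVec, dotProduct, mul_comm]
  refine A.exists_eq_comp_of_mulVec_eq f (fun c c' hcc' => funext fun i => ?_)
    (b := fun o => o.elim 1 b) ?_
  · rw [hmulVec, hmulVec] at hcc'
    exact hz.eq_of_sum_eq_sum (congrFun hcc' none)
      (funext fun p => congrFun hcc' (some p)) i (Finset.mem_univ i)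
  · rw [hmulVec, hw, hb]
    funext o
    cases o <;> simp

theorem exists_nat_eq_mul_of_nonneg {ι : Type*} [Fintype ι] (q : ι → ℚ) (hq : ∀ i, 0 ≤ q i) :
    ∃ N : ℕ, 0 < N ∧ ∃ n : ι → ℕ, ∀ i, (n i : ℚ) = N * q i := by
  refine ⟨∏ i, (q i).den, Finset.prod_pos fun i _ => (q i).den_pos, ?_⟩
  have (i : ι) : ∃ n : ℕ, (n : ℚ) = (∏ j, (q j).den : ℕ) * q i := by
    obtain ⟨m, hm⟩ := Finset.dvd_prod_of_mem (fun j => (q j).den) (Finset.mem_univ i)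
    have hnum : (((q i).num.toNat : ℕ) : ℚ) = (q i).num := by
      exact_mod_cast Int.toNat_of_nonneg (Rat.num_nonneg.2 (hq i))
    refine ⟨m * (q i).num.toNat, ?_⟩
    rw [hm, Nat.cast_mul, Nat.cast_mul, hnum, ← Rat.mul_den_eq_num]
    ring
  choose n hn using this
  exact ⟨n, hn⟩

/-- By Carathéodory the point is a positive combination of affinely independent vertices; the
coefficients are then rational, and `N` is a common denominator. -/
theorem exists_multiset_sum_eq_nsmul_of_mem_convexHull {α P : Type*} [Fintype P]
    (g : α → P → ℚ) {v : P → ℚ}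
    (hv : (fun p => (v p : ℝ)) ∈ convexHull ℝ (Set.range fun a p => (g a p : ℝ))) :
    ∃ N : ℕ, 0 < N ∧ ∃ M : Multiset α, Multiset.card M = N ∧
      (M.map fun a p => (g a p : ℝ)).sum = (N : ℝ) • fun p => (v p : ℝ) := by
  obtain ⟨ι, _, z, w, hzg, hz, hw0, hw1, hwz⟩ := eq_pos_convex_span_of_mem_convexHull hv
  choose a ha using fun i => hzg (Set.mem_range_self i)
  obtain rfl : z = fun i p => (g (a i) p : ℝ) := funext fun i => (ha i).symm
  obtain ⟨wq, rfl⟩ := hz.exists_eq_comp_of_sum_smul_eq (Rat.castHom ℝ) hw1 hwz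
  obtain ⟨N, hN, n, hn⟩ := exists_nat_eq_mul_of_nonneg wq fun i => by
    simpa using (hw0 i).le
  have hnR (i : ι) : (n i : ℝ) = N * wq i := by exact_mod_cast hn i
  refine ⟨N, hN, Finset.univ.val.bind fun i => Multiset.replicate (n i) (a i), ?_, ?_⟩
  · have hw1q : ∑ i, wq i = 1 := by exact_mod_cast (by simpa using hw1 : ∑ i, (wq i : ℝ) = 1)
    have : (∑ i, n i : ℚ) = N := by simp [hn, ← Finset.mul_sum, hw1q]
    rw [Multiset.card_bind]
    simpa [Function.comp_def] using (by exact_mod_cast this : ∑ i, n i = N)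
  · rw [Multiset.map_bind, Multiset.sum_bind]
    simp only [Multiset.map_replicate, Multiset.sum_replicate, Finset.sum_map_val]
    rw [← hwz, Finset.smul_sum]
    refine Finset.sum_congr rfl fun i _ => ?_
    rw [← Nat.cast_smul_eq_nsmul ℝ, hnR, mul_smul]
    rfl

theorem exists_multiset_vertexSum_eq_nsmul {P : Type*} [Fintype P] {lt lt' : P → P → Prop}
    {v : P → ℚ} (hv : (fun p => (v p : ℝ)) ∈ RPP lt lt') :
    ∃ N : ℕ, 0 < N ∧ ∃ M : Multiset (Set P), (∀ J ∈ M, IsLowerIdeal lt J) ∧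
      Multiset.card M = N ∧ vertexSum lt' M = (N : ℝ) • fun p => (v p : ℝ) := by
  let g (J : {J : Set P // IsLowerIdeal lt J}) : P → ℚ := (maxElems lt' J.1).indicator 1
  have hg (J : {J : Set P // IsLowerIdeal lt J}) :
      (fun p => (g J p : ℝ)) = ind (maxElems lt' J.1) := by
    classical
    funext p
    simp only [g, ind, Set.indicator_apply]
    split_ifs <;> simp
  have hRPP : RPP lt lt' = convexHull ℝ (Set.range fun J p => (g J p : ℝ)) := by
    rw [RPP, show (fun J p => (g J p : ℝ)) = fun J => ind (maxElems lt' J.1) from funext hg]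
    congr 1
    ext
    simp [eq_comm]
  obtain ⟨N, hN, M, hcard, hsum⟩ :=
    exists_multiset_sum_eq_nsmul_of_mem_convexHull g (hRPP ▸ hv)
  refine ⟨N, hN, M.map Subtype.val, fun J hJ => ?_, by simp [hcard], ?_⟩
  · obtain ⟨J', -, rfl⟩ := Multiset.mem_map.1 hJ
    exact J'.2
  simpa [vertexSum, Multiset.map_map, Function.comp_def, hg] using hsum

theorem exists_chain_of_mem_dilate {P : Type*} [Fintype P] {lt lt' : P → P → Prop}
    (hweak : ∀ p q, lt' p q → lt p q)
    (hstar : ∀ J₁ J₂ : Set P, IsLowerIdeal lt J₁ → IsLowerIdeal lt J₂ →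
      IsLowerIdeal lt (starOp lt' J₁ J₂))
    {k : ℕ} (hk : 1 ≤ k) {x : P → ℤ} (hx : (fun p => (x p : ℝ)) ∈ dilate k (RPP lt lt')) :
    ∃ N : ℕ, 0 < N ∧ ∃ C : Multiset (Set P), (∀ J ∈ C, IsLowerIdeal lt J) ∧
      (∀ J₁ ∈ C, ∀ J₂ ∈ C, J₁ ⊆ J₂ ∨ J₂ ⊆ J₁) ∧ Multiset.card C = N * k ∧
      vertexSum lt' C = fun p => (N : ℝ) * x p := by
  obtain ⟨v, hv, hxv⟩ := hx
  replace hxv : (k : ℝ) • v = fun p => (x p : ℝ) := hxv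
  have hvx : v = fun p => ((x p / k : ℚ) : ℝ) := by
    funext p
    have := congrFun hxv p
    simp only [Pi.smul_apply, smul_eq_mul] at this
    push_cast
    rw [← this]
    field_simp
  obtain ⟨N, hN, M, hMideal, hMcard, hMsum⟩ := exists_multiset_vertexSum_eq_nsmul (hvx ▸ hv)
  obtain ⟨C, hCcard, hCideal, hCchain, hCsum⟩ := exists_chain_vertexSum_eq hweak hstar (k • M)
    fun J hJ => hMideal J (Multiset.mem_nsmul.1 hJ).2
  refine ⟨N, hN, C, hCideal, hCchain, by rw [hCcard, Multiset.card_nsmul, hMcard, mul_comm], ?_⟩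
  rw [hCsum, vertexSum, Multiset.map_nsmul, Multiset.sum_nsmul, ← vertexSum, hMsum, ← hvx,
    smul_comm, ← Nat.cast_smul_eq_nsmul ℝ k v, hxv]
  rfl

theorem stmt5_general {P : Type*} [Fintype P] (lt lt' : P → P → Prop)
    (hlt'irr : ∀ p, ¬ lt' p p) (hlt'tr : ∀ a b c, lt' a b → lt' b c → lt' a c)
    (hweak : ∀ p q, lt' p q → lt p q)
    (hstar : ∀ J1 J2 : Set P, IsLowerIdeal lt J1 → IsLowerIdeal lt J2 →
      IsLowerIdeal lt (starOp lt' J1 J2))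
    (k : ℕ) (hk : 1 ≤ k) (x : P → ℤ)
    (hx : (fun p => (x p : ℝ)) ∈ dilate k (RPP lt lt')) :
    ∃ y : Fin k → P → ℤ,
      (∀ i, (fun p => (y i p : ℝ)) ∈ RPP lt lt') ∧
      (fun p => (x p : ℝ)) = ∑ i, (fun p => (y i p : ℝ)) := by
  classical
  obtain ⟨N, hN, C, hCideal, hCchain, hCcard, hCsum⟩ := exists_chain_of_mem_dilate hweak hstar hk hx
  obtain ⟨h, hanti, -, hsum⟩ :=
    exists_layers_vertexSum_eq hlt'irr hlt'tr hweak hCideal hCchain hN hCcard hCsum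
  have hy (i : ℕ) : (fun p => ((if p ∈ maxElems lt' {q | i < h q} then 1 else 0 : ℤ) : ℝ)) =
      ind (maxElems lt' {q | i < h q}) := by
    funext p
    simp [ind, Set.indicator_apply]
  refine ⟨fun i p => if p ∈ maxElems lt' {q | i < h q} then 1 else 0, fun i => ?_, ?_⟩
  · rw [hy]
    exact subset_convexHull ℝ _ ⟨_, isLowerIdeal_setOf_lt hanti i, rfl⟩
  · beta_reduce
    rw [Finset.sum_congr rfl fun (i : Fin k) _ => hy i, ← vertexSum_layers, hsum]

/-- The relative poset polytope `R(P, lt, lt')` is normal: every integer point of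
`k·R(P, lt, lt')` is a sum of `k` integer points of `R(P, lt, lt')`. -/
theorem stmt5 {P : Type*} [Fintype P] (lt lt' : P → P → Prop)
    (hltirr : ∀ p, ¬ lt p p) (hlttr : ∀ a b c, lt a b → lt b c → lt a c)
    (hlt'irr : ∀ p, ¬ lt' p p) (hlt'tr : ∀ a b c, lt' a b → lt' b c → lt' a c)
    (hweak : ∀ p q, lt' p q → lt p q)
    (hstar : ∀ J1 J2 : Set P, IsLowerIdeal lt J1 → IsLowerIdeal lt J2 →
      IsLowerIdeal lt (starOp lt' J1 J2))
    (k : ℕ) (hk : 1 ≤ k) (x : P → ℤ)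
    (hx : (fun p => (x p : ℝ)) ∈ dilate k (RPP lt lt')) :
    ∃ y : Fin k → P → ℤ,
      (∀ i, (fun p => (y i p : ℝ)) ∈ RPP lt lt') ∧
      (fun p => (x p : ℝ)) = ∑ i, (fun p => (y i p : ℝ)) :=
  stmt5_general lt lt' hlt'irr hlt'tr hweak hstar k hk x hx
end

section
/- In the setup below, for every integer m ≥ 0, every integer point x ∈ ℤ^P with x ∈ m·R(P,<,<') can be uniquely expressed in the form x = 1_{max_{<'} J_1} + ⋯ + 1_{max_{<'} J_m} where J_1 ⊆ J_2 ⊆ ⋯ ⊆ J_m is a weakly increasing tuple of order ideals in 𝒥. -/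
set_option linter.unusedSectionVars false


open Pointwise

attribute [local instance] Classical.propDecidable

namespace Stmt7Aux

variable {P : Type*} [Fintype P]

lemma ind_apply (A : Set P) (p : P) : ind A p = if p ∈ A then (1:ℝ) else 0 := by
  simp [ind, Set.indicator_apply]

lemma ind_nonneg (A : Set P) (p : P) : 0 ≤ ind A p := by
  rw [ind_apply]; split <;> norm_num

lemma ind_le_one (A : Set P) (p : P) : ind A p ≤ 1 := by
  rw [ind_apply]; split <;> norm_num

section f

variable (lt' : P → P → Prop)

/-- `D` is a finite `lt'`-chain whose minimum is `p`. -/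
def ChF (p : P) (D : Finset P) : Prop :=
  p ∈ D ∧ (∀ d ∈ D, d = p ∨ lt' p d) ∧ ∀ a ∈ D, ∀ b ∈ D, a = b ∨ lt' a b ∨ lt' b a

noncomputable def chSet (p : P) : Finset (Finset P) :=
  Finset.univ.filter (fun D => ChF lt' p D)

lemma chf_singleton (p : P) : ChF lt' p {p} := by
  refine ⟨Finset.mem_singleton_self p, ?_, ?_⟩ <;> intros <;> simp_all

lemma chSet_ne (p : P) : (chSet lt' p).Nonempty :=
  ⟨{p}, by simp [chSet, chf_singleton]⟩

/-- maximal weight of an `lt'`-chain starting at `p`. -/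
noncomputable def ff (x : P → ℝ) (p : P) : ℝ :=
  (chSet lt' p).sup' (chSet_ne lt' p) (fun D => ∑ d ∈ D, x d)

lemma le_ff {x : P → ℝ} {p : P} {D : Finset P} (hD : ChF lt' p D) :
    ∑ d ∈ D, x d ≤ ff lt' x p :=
  Finset.le_sup' (f := fun D => ∑ d ∈ D, x d)
    (Finset.mem_filter.mpr ⟨Finset.mem_univ _, hD⟩)

lemma ff_eq_wt (x : P → ℝ) (p : P) :
    ∃ D : Finset P, ChF lt' p D ∧ ff lt' x p = ∑ d ∈ D, x d := by
  obtain ⟨D, hD, h⟩ := Finset.exists_mem_eq_sup' (chSet_ne lt' p) (fun D => ∑ d ∈ D, x d)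
  exact ⟨D, (Finset.mem_filter.mp hD).2, h⟩

lemma ff_le {x : P → ℝ} {p : P} {c : ℝ}
    (h : ∀ D : Finset P, ChF lt' p D → ∑ d ∈ D, x d ≤ c) : ff lt' x p ≤ c :=
  Finset.sup'_le _ _ (fun D hD => h D (Finset.mem_filter.mp hD).2)

lemma ff_ge_self (x : P → ℝ) (p : P) : x p ≤ ff lt' x p := by
  have := le_ff lt' (x := x) (chf_singleton lt' p)
  simpa using this

lemma ff_nonneg {x : P → ℝ} (hx : ∀ s, 0 ≤ x s) (p : P) : 0 ≤ ff lt' x p :=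
  le_trans (hx p) (ff_ge_self lt' x p)

lemma chf_insert (htr : ∀ a b c, lt' a b → lt' b c → lt' a c)
    {p a : P} (hpa : p = a ∨ lt' p a) {D : Finset P} (hD : ChF lt' a D) :
    ChF lt' p (insert p D) := by
  have hcomp : ∀ d ∈ insert p D, d = p ∨ lt' p d := by
    intro d hd
    rcases Finset.mem_insert.mp hd with h | h
    · exact Or.inl h
    · rcases hD.2.1 d h with h' | h'
      · rcases hpa with h2 | h2
        · exact Or.inl (h'.trans h2.symm)
        · exact Or.inr (by rw [h']; exact h2)
      · rcases hpa with h2 | h2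
        · exact Or.inr (by rw [h2]; exact h')
        · exact Or.inr (htr _ _ _ h2 h')
  refine ⟨Finset.mem_insert_self p D, hcomp, ?_⟩
  intro a' ha' b hb
  rcases Finset.mem_insert.mp ha' with h1 | h1
  · rcases hcomp b hb with h2 | h2
    · exact Or.inl (h1.trans h2.symm)
    · exact Or.inr (Or.inl (by rw [h1]; exact h2))
  · rcases Finset.mem_insert.mp hb with h2 | h2
    · rcases hcomp a' ha' with h3 | h3
      · exact Or.inl (h3.trans h2.symm)
      · exact Or.inr (Or.inr (by rw [h2]; exact h3))
    · exact hD.2.2 a' h1 b h2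

lemma ff_succ (htr : ∀ a b c, lt' a b → lt' b c → lt' a c) (hirr : ∀ p, ¬ lt' p p)
    (x : P → ℝ) {p q : P} (hpq : lt' p q) : x p + ff lt' x q ≤ ff lt' x p := by
  obtain ⟨D, hD, hval⟩ := ff_eq_wt lt' x q
  have hpD : p ∉ D := by
    intro hp
    rcases hD.2.1 p hp with h | h
    · exact hirr q (h ▸ hpq)
    · exact hirr p (htr _ _ _ hpq h)
  have hcomp : ∀ d ∈ insert p D, d = p ∨ lt' p d := by
    intro d hd
    rcases Finset.mem_insert.mp hd with h | h
    · exact Or.inl h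
    · rcases hD.2.1 d h with h' | h'
      · exact Or.inr (by rw [h']; exact hpq)
      · exact Or.inr (htr _ _ _ hpq h')
  have hch : ChF lt' p (insert p D) := by
    refine ⟨Finset.mem_insert_self p D, hcomp, ?_⟩
    intro a ha b hb
    rcases Finset.mem_insert.mp ha with h1 | h1
    · rcases Finset.mem_insert.mp hb with h2 | h2
      · exact Or.inl (h1.trans h2.symm)
      · rcases hcomp b hb with h3 | h3
        · exact Or.inl (h1.trans h3.symm)
        · exact Or.inr (Or.inl (by rw [h1]; exact h3))
    · rcases Finset.mem_insert.mp hb with h2 | h2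
      · rcases hcomp a ha with h3 | h3
        · exact Or.inl (h3.trans h2.symm)
        · exact Or.inr (Or.inr (by rw [h2]; exact h3))
      · exact hD.2.2 a h1 b h2
  have := le_ff lt' (x := x) hch
  rw [Finset.sum_insert hpD] at this
  rw [hval]
  exact this

lemma ff_rec (htr : ∀ a b c, lt' a b → lt' b c → lt' a c) (hirr : ∀ p, ¬ lt' p p)
    (x : P → ℝ) (p : P) :
    ff lt' x p = x p ∨ ∃ q, lt' p q ∧ ff lt' x p ≤ x p + ff lt' x q := by
  obtain ⟨D, hD, hval⟩ := ff_eq_wt lt' x p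
  by_cases hDp : D = {p}
  · left; rw [hval, hDp, Finset.sum_singleton]
  · right
    have hne : (↑(D.erase p) : Set P).Nonempty := by
      have : D.erase p ≠ ∅ := by
        intro h
        apply hDp
        apply Finset.eq_singleton_iff_unique_mem.mpr
        refine ⟨hD.1, fun y hy => ?_⟩
        by_contra hyp
        have := (Finset.ext_iff.mp h y).mp (Finset.mem_erase.mpr ⟨hyp, hy⟩)
        simp at this
      obtain ⟨y, hy⟩ := Finset.nonempty_of_ne_empty this
      exact ⟨y, hy⟩
    have hwf : WellFounded lt' := by
      have h1 : IsTrans P lt' := ⟨fun a b c => htr a b c⟩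
      have h2 : IsIrrefl P lt' := ⟨hirr⟩
      exact Finite.wellFounded_of_trans_of_irrefl lt'
    obtain ⟨q, hq, hqmin⟩ := hwf.has_min _ hne
    have hqD : q ∈ D.erase p := hq
    have hqp : q ≠ p := (Finset.mem_erase.mp hqD).1
    have hqD' : q ∈ D := (Finset.mem_erase.mp hqD).2
    have hpq : lt' p q := by
      rcases hD.2.1 q hqD' with rfl | h
      · exact absurd rfl hqp
      · exact h
    refine ⟨q, hpq, ?_⟩
    have hch : ChF lt' q (D.erase p) := by
      refine ⟨hqD, ?_, ?_⟩
      · intro d hd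
        have hdD : d ∈ D := (Finset.mem_erase.mp hd).2
        rcases hD.2.2 d hdD q hqD' with h | h | h
        · exact Or.inl h
        · exact absurd hd (by intro hh; exact hqmin d hh h)
        · exact Or.inr h
      · intro a ha b hb
        exact hD.2.2 a (Finset.mem_erase.mp ha).2 b (Finset.mem_erase.mp hb).2
    have h1 : ∑ d ∈ D.erase p, x d ≤ ff lt' x q := le_ff lt' hch
    have h2 : x p + ∑ d ∈ D.erase p, x d = ∑ d ∈ D, x d :=
      Finset.add_sum_erase D x hD.1
    rw [hval, ← h2]
    linarith

lemma ff_perturb (x y : P → ℝ) (p : P) :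
    ff lt' x p ≤ ff lt' y p + ∑ s, |x s - y s| := by
  apply ff_le
  intro D hD
  have h1 : ∑ d ∈ D, x d ≤ ∑ d ∈ D, y d + ∑ d ∈ D, |x d - y d| := by
    rw [← Finset.sum_add_distrib]
    apply Finset.sum_le_sum
    intro d _
    have := abs_nonneg (x d - y d)
    have := le_abs_self (x d - y d)
    linarith
  have h2 : ∑ d ∈ D, y d ≤ ff lt' y p := le_ff lt' hD
  have h3 : ∑ d ∈ D, |x d - y d| ≤ ∑ s, |x s - y s| :=
    Finset.sum_le_sum_of_subset_of_nonneg (Finset.subset_univ D)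
      (fun s _ _ => abs_nonneg _)
  linarith

lemma ff_smul (x : P → ℝ) {c : ℝ} (hc : 0 ≤ c) (p : P) :
    ff lt' (fun s => c * x s) p = c * ff lt' x p := by
  apply le_antisymm
  · apply ff_le
    intro D hD
    rw [← Finset.mul_sum]
    exact mul_le_mul_of_nonneg_left (le_ff lt' hD) hc
  · obtain ⟨D, hD, hval⟩ := ff_eq_wt lt' x p
    rw [hval, Finset.mul_sum]
    exact le_ff lt' hD

end f

section M

variable (lt lt' : P → P → Prop)

/-- On an `lt'`-chain `D`, the indicator of `maxElems lt' I` sums to at most 1;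
moreover if it is positive and `D` is a chain from `p` with `I` an ideal, then `p ∈ I`. -/
lemma sum_ind_le_one {D : Finset P} (hD : ∀ a ∈ D, ∀ b ∈ D, a = b ∨ lt' a b ∨ lt' b a)
    (I : Set P) : ∑ d ∈ D, ind (maxElems lt' I) d ≤ 1 := by
  by_cases h : ∃ a ∈ D, a ∈ maxElems lt' I
  · obtain ⟨a, haD, haI⟩ := h
    have : ∀ d ∈ D, d ≠ a → ind (maxElems lt' I) d = 0 := by
      intro d hd hda
      rw [ind_apply]
      rw [if_neg]
      intro hdI
      rcases hD d hd a haD with h | h | h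
      · exact hda h
      · exact hdI.2 a haI.1 h
      · exact haI.2 d hdI.1 h
    calc ∑ d ∈ D, ind (maxElems lt' I) d = ind (maxElems lt' I) a := by
            rw [Finset.sum_eq_single_of_mem a haD this]
      _ ≤ 1 := ind_le_one _ _
  · push_neg at h
    have : ∀ d ∈ D, ind (maxElems lt' I) d = 0 := by
      intro d hd
      rw [ind_apply, if_neg (h d hd)]
    rw [Finset.sum_eq_zero this]
    norm_num

lemma sum_ind_le_ite (hweak : ∀ p q, lt' p q → lt p q)
    {p : P} {D : Finset P} (hD : ChF lt' p D) {I : Set P} (hI : IsLowerIdeal lt I) :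
    ∑ d ∈ D, ind (maxElems lt' I) d ≤ if p ∈ I then (1:ℝ) else 0 := by
  by_cases hp : p ∈ I
  · rw [if_pos hp]
    exact sum_ind_le_one lt' hD.2.2 I
  · rw [if_neg hp]
    apply le_of_eq
    apply Finset.sum_eq_zero
    intro d hd
    rw [ind_apply, if_neg]
    intro hdI
    apply hp
    rcases hD.2.1 d hd with h | h
    · rw [← h]; exact hdI.1
    · exact hI (hweak _ _ h) hdI.1

/-- the vector `∑_{I ∈ M} 1_{max' I}`, pointwise. -/
noncomputable def zz (M : Multiset (Set P)) : P → ℝ :=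
  fun p => (M.map (fun I => ind (maxElems lt' I) p)).sum

/-- number of ideals in `M` containing `p`. -/
noncomputable def cnt (M : Multiset (Set P)) (p : P) : ℕ :=
  Multiset.card (M.filter (fun I => p ∈ I))

lemma zz_cons (I : Set P) (M : Multiset (Set P)) (p : P) :
    zz lt' (I ::ₘ M) p = ind (maxElems lt' I) p + zz lt' M p := by
  simp [zz]

lemma zz_nonneg (M : Multiset (Set P)) (p : P) : 0 ≤ zz lt' M p := by
  apply Multiset.sum_nonneg
  intro a ha
  obtain ⟨I, _, rfl⟩ := Multiset.mem_map.mp ha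
  exact ind_nonneg _ _

lemma cnt_cast (M : Multiset (Set P)) (p : P) :
    (cnt M p : ℝ) = (M.map (fun I => if p ∈ I then (1:ℝ) else 0)).sum := by
  induction M using Multiset.induction_on with
  | empty => simp [cnt]
  | cons I M ih =>
    by_cases h : p ∈ I <;>
      simp [cnt, Multiset.filter_cons, h, ← ih, cnt] <;> ring

lemma card_filter_mono {α : Type*} (M : Multiset α) (Q R : α → Prop)
    (h : ∀ a ∈ M, Q a → R a) :
    Multiset.card (M.filter Q) ≤ Multiset.card (M.filter R) := by
  induction M using Multiset.induction_on with
  | empty => simp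
  | cons a M ih =>
    have hM : ∀ b ∈ M, Q b → R b := fun b hb => h b (Multiset.mem_cons_of_mem hb)
    by_cases hq : Q a
    · have hr : R a := h a (Multiset.mem_cons_self a M) hq
      simp [Multiset.filter_cons, hq, hr]
      exact ih hM
    · by_cases hr : R a <;> simp [Multiset.filter_cons, hq, hr] <;>
        [exact le_trans (ih hM) (Nat.le_succ _); exact ih hM]

/-- a nonempty pairwise-⊆-comparable multiset of sets has a least element. -/
lemma exists_least (M : Multiset (Set P)) (hM : ∀ I ∈ M, ∀ K ∈ M, I ⊆ K ∨ K ⊆ I)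
    (hne : M ≠ 0) : ∃ I₀ ∈ M, ∀ K ∈ M, I₀ ⊆ K := by
  induction M using Multiset.induction_on with
  | empty => exact absurd rfl hne
  | cons I M ih =>
    by_cases hM0 : M = 0
    · subst hM0
      exact ⟨I, Multiset.mem_cons_self _ _, by
        intro K hK
        rcases Multiset.mem_cons.mp hK with rfl | h
        · exact subset_rfl
        · simp at h⟩
    · obtain ⟨I₀, hI₀, hleast⟩ := ih (fun A hA B hB =>
        hM A (Multiset.mem_cons_of_mem hA) B (Multiset.mem_cons_of_mem hB)) hM0
      rcases hM I (Multiset.mem_cons_self _ _) I₀ (Multiset.mem_cons_of_mem hI₀) with h | h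
      · refine ⟨I, Multiset.mem_cons_self _ _, ?_⟩
        intro K hK
        rcases Multiset.mem_cons.mp hK with rfl | hK
        · exact subset_rfl
        · exact h.trans (hleast K hK)
      · refine ⟨I₀, Multiset.mem_cons_of_mem hI₀, ?_⟩
        intro K hK
        rcases Multiset.mem_cons.mp hK with rfl | hK
        · exact h
        · exact hleast K hK

/-- every element of a finite set lies below some `lt'`-maximal element. -/
lemma exists_max_above (htr : ∀ a b c, lt' a b → lt' b c → lt' a c)
    (hirr : ∀ p, ¬ lt' p p) {J : Set P} {p : P} (hp : p ∈ J) :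
    ∃ a ∈ maxElems lt' J, p = a ∨ lt' p a := by
  have hwf : WellFounded (fun a b => lt' b a) := by
    have h1 : IsTrans P (fun a b => lt' b a) := ⟨fun a b c hab hbc => htr c b a hbc hab⟩
    have h2 : IsIrrefl P (fun a b => lt' b a) := ⟨fun a h => hirr a h⟩
    exact Finite.wellFounded_of_trans_of_irrefl _
  induction p using hwf.induction with
  | _ p ih =>
    by_cases hmax : p ∈ maxElems lt' J
    · exact ⟨p, hmax, Or.inl rfl⟩
    · have : ∃ q ∈ J, lt' p q := by
        by_contra h
        push_neg at h
        exact hmax ⟨hp, h⟩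
      obtain ⟨q, hqJ, hpq⟩ := this
      obtain ⟨a, ha, hqa⟩ := ih q hpq hqJ
      refine ⟨a, ha, Or.inr ?_⟩
      rcases hqa with rfl | h
      · exact hpq
      · exact htr _ _ _ hpq h

/-- upper bound: `ff (zz M) p ≤ cnt M p`. -/
lemma M1 (hweak : ∀ p q, lt' p q → lt p q) (M : Multiset (Set P))
    (hM : ∀ I ∈ M, IsLowerIdeal lt I) (p : P) :
    ff lt' (zz lt' M) p ≤ (cnt M p : ℝ) := by
  apply ff_le
  intro D hD
  have key : ∑ d ∈ D, zz lt' M d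
      = (M.map (fun I => ∑ d ∈ D, ind (maxElems lt' I) d)).sum := by
    induction M using Multiset.induction_on with
    | empty => simp [zz]
    | cons I M ih => simp only [zz_cons, Finset.sum_add_distrib, Multiset.map_cons,
        Multiset.sum_cons, ih (fun K hK => hM K (Multiset.mem_cons_of_mem hK))]
  rw [key, cnt_cast]
  apply Multiset.sum_map_le_sum_map
  intro I hI
  exact sum_ind_le_ite lt lt' hweak hD (hM I hI)

/-- lower bound for chains: `cnt M p ≤ ff (zz M) p`. -/
lemma M2 (hweak : ∀ p q, lt' p q → lt p q)
    (htr : ∀ a b c, lt' a b → lt' b c → lt' a c) (hirr : ∀ p, ¬ lt' p p)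
    (M : Multiset (Set P)) (hM : ∀ I ∈ M, IsLowerIdeal lt I)
    (hchain : ∀ I ∈ M, ∀ K ∈ M, I ⊆ K ∨ K ⊆ I) (p : P) :
    (cnt M p : ℝ) ≤ ff lt' (zz lt' M) p := by
  suffices h : ∀ n (M : Multiset (Set P)), Multiset.card M ≤ n →
      (∀ I ∈ M, IsLowerIdeal lt I) → (∀ I ∈ M, ∀ K ∈ M, I ⊆ K ∨ K ⊆ I) →
      ∀ p, (cnt M p : ℝ) ≤ ff lt' (zz lt' M) p by
    exact h (Multiset.card M) M le_rfl hM hchain p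
  clear hM hchain p M
  intro n
  induction n with
  | zero =>
    intro M hcard _ _ p
    have : M = 0 := Multiset.card_eq_zero.mp (Nat.le_zero.mp hcard)
    subst this
    simpa [cnt] using ff_nonneg lt' (zz_nonneg lt' 0) p
  | succ n ih =>
    intro M hcard hM hchain p
    by_cases h0 : cnt M p = 0
    · rw [h0]
      simpa using ff_nonneg lt' (zz_nonneg lt' M) p
    · have hne : M.filter (fun I => p ∈ I) ≠ 0 := by
        intro h
        exact h0 (by simp [cnt, h])
      obtain ⟨I₀, hI₀f, hleast'⟩ := exists_least (M.filter (fun I => p ∈ I))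
        (fun A hA B hB => hchain A (Multiset.mem_of_mem_filter hA)
          B (Multiset.mem_of_mem_filter hB)) hne
      have hI₀M : I₀ ∈ M := Multiset.mem_of_mem_filter hI₀f
      have hpI₀ : p ∈ I₀ := (Multiset.mem_filter.mp hI₀f).2
      have hleast : ∀ K ∈ M, p ∈ K → I₀ ⊆ K := fun K hK hpK =>
        hleast' K (Multiset.mem_filter.mpr ⟨hK, hpK⟩)
      obtain ⟨a, haMax, hpa⟩ := exists_max_above lt' htr hirr hpI₀
      set M'' := M.erase I₀ with hM''def
      have hconsM : I₀ ::ₘ M'' = M := Multiset.cons_erase hI₀M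
      have hcard'' : Multiset.card M'' ≤ n := by
        have := congrArg Multiset.card hconsM
        simp at this
        omega
      have hMid'' : ∀ I ∈ M'', IsLowerIdeal lt I := fun I hI =>
        hM I (Multiset.mem_of_mem_erase hI)
      have hch'' : ∀ I ∈ M'', ∀ K ∈ M'', I ⊆ K ∨ K ⊆ I := fun I hI K hK =>
        hchain I (Multiset.mem_of_mem_erase hI) K (Multiset.mem_of_mem_erase hK)
      have ih'' := ih M'' hcard'' hMid'' hch'' a
      have h1 : cnt M p = 1 + cnt M'' p := by
        rw [← hconsM]
        simp [cnt, Multiset.filter_cons, hpI₀]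
        omega
      have h2 : cnt M'' p ≤ cnt M'' a :=
        card_filter_mono M'' _ _ (fun K hK hpK =>
          hleast K (Multiset.mem_of_mem_erase hK) hpK haMax.1)
      obtain ⟨D'', hD'', hval''⟩ := ff_eq_wt lt' (zz lt' M'') a
      have hch := chf_insert lt' htr hpa hD''
      have hle : ∑ d ∈ insert p D'', zz lt' M d ≤ ff lt' (zz lt' M) p := le_ff lt' hch
      have hzzM : ∀ d, zz lt' M d = ind (maxElems lt' I₀) d + zz lt' M'' d := by
        intro d
        rw [← hconsM, zz_cons]
      have ha_in : a ∈ insert p D'' := Finset.mem_insert_of_mem hD''.1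
      have hsum1 : (1:ℝ) ≤ ∑ d ∈ insert p D'', ind (maxElems lt' I₀) d := by
        rw [show (1:ℝ) = ind (maxElems lt' I₀) a by rw [ind_apply, if_pos haMax]]
        exact Finset.single_le_sum (f := fun d => ind (maxElems lt' I₀) d)
          (fun i _ => ind_nonneg _ _) ha_in
      have hsum2 : ∑ d ∈ D'', zz lt' M'' d ≤ ∑ d ∈ insert p D'', zz lt' M'' d :=
        Finset.sum_le_sum_of_subset_of_nonneg (Finset.subset_insert _ _)
          (fun s _ _ => zz_nonneg lt' M'' s)
      have hsplit : ∑ d ∈ insert p D'', zz lt' M d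
          = ∑ d ∈ insert p D'', ind (maxElems lt' I₀) d
            + ∑ d ∈ insert p D'', zz lt' M'' d := by
        rw [← Finset.sum_add_distrib]
        exact Finset.sum_congr rfl (fun d _ => hzzM d)
      have hcast : (cnt M p : ℝ) = 1 + (cnt M'' p : ℝ) := by
        rw [h1]; push_cast; ring
      have hcast2 : (cnt M'' p : ℝ) ≤ (cnt M'' a : ℝ) := by exact_mod_cast h2
      rw [hcast]
      rw [hval''] at ih''
      linarith

end M

section Star

variable (lt lt' : P → P → Prop)

lemma union_ideal {I K : Set P} (hI : IsLowerIdeal lt I) (hK : IsLowerIdeal lt K) :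
    IsLowerIdeal lt (I ∪ K) := by
  rintro p q hpq (h | h)
  · exact Or.inl (hI hpq h)
  · exact Or.inr (hK hpq h)

lemma star_subset_inter (hweak : ∀ p q, lt' p q → lt p q) {I K : Set P}
    (hI : IsLowerIdeal lt I) (hK : IsLowerIdeal lt K) :
    starOp lt' I K ⊆ I ∩ K := by
  rintro p ⟨g, hg, hpg⟩
  rcases hpg with rfl | h
  · exact hg.1
  · exact ⟨hI (hweak _ _ h) hg.1.1, hK (hweak _ _ h) hg.1.2⟩

lemma maxStar (htr : ∀ a b c, lt' a b → lt' b c → lt' a c) (I K : Set P) :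
    maxElems lt' (starOp lt' I K)
      = (I ∩ K) ∩ (maxElems lt' I ∪ maxElems lt' K) := by
  ext p
  constructor
  · rintro ⟨hpS, hmax⟩
    obtain ⟨g, hg, hpg⟩ := hpS
    rcases hpg with rfl | h
    · exact hg
    · exact absurd h (hmax g ⟨g, hg, Or.inl rfl⟩)
  · intro hg
    refine ⟨⟨p, hg, Or.inl rfl⟩, ?_⟩
    rintro b ⟨g', hg', hbg'⟩ hpb
    have hpg' : lt' p g' := by
      rcases hbg' with rfl | h
      · exact hpb
      · exact htr _ _ _ hpb h
    rcases hg.2 with hA1 | hA2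
    · exact hA1.2 g' hg'.1.1 hpg'
    · exact hA2.2 g' hg'.1.2 hpg'

lemma star_id (hweak : ∀ p q, lt' p q → lt p q)
    (htr : ∀ a b c, lt' a b → lt' b c → lt' a c)
    {I K : Set P} (hI : IsLowerIdeal lt I) (hK : IsLowerIdeal lt K) (p : P) :
    ind (maxElems lt' (starOp lt' I K)) p + ind (maxElems lt' (I ∪ K)) p
      = ind (maxElems lt' I) p + ind (maxElems lt' K) p := by
  rw [ind_apply, ind_apply, ind_apply, ind_apply, maxStar lt' htr]
  by_cases h1 : p ∈ maxElems lt' I <;> by_cases h2 : p ∈ maxElems lt' K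
  · have hS : p ∈ (I ∩ K) ∩ (maxElems lt' I ∪ maxElems lt' K) :=
      ⟨⟨h1.1, h2.1⟩, Or.inl h1⟩
    have hU : p ∈ maxElems lt' (I ∪ K) := by
      refine ⟨Or.inl h1.1, ?_⟩
      rintro q (hq | hq) hpq
      · exact h1.2 q hq hpq
      · exact h2.2 q hq hpq
    simp [hS, hU, h1, h2]
  · by_cases hpK : p ∈ K
    · have hS : p ∈ (I ∩ K) ∩ (maxElems lt' I ∪ maxElems lt' K) :=
        ⟨⟨h1.1, hpK⟩, Or.inl h1⟩
      have hU : p ∉ maxElems lt' (I ∪ K) := by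
        have hq : ¬ (∀ q ∈ K, ¬ lt' p q) := fun h => h2 ⟨hpK, h⟩
        push_neg at hq
        obtain ⟨q, hqK, hpq⟩ := hq
        intro hU
        exact hU.2 q (Or.inr hqK) hpq
      simp [hS, hU, h1, h2]
    · have hS : p ∉ (I ∩ K) ∩ (maxElems lt' I ∪ maxElems lt' K) :=
        fun hS => hpK hS.1.2
      have hU : p ∈ maxElems lt' (I ∪ K) := by
        refine ⟨Or.inl h1.1, ?_⟩
        rintro q (hq | hq) hpq
        · exact h1.2 q hq hpq
        · exact hpK (hK (hweak _ _ hpq) hq)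
      simp [hS, hU, h1, h2]
  · by_cases hpI : p ∈ I
    · have hS : p ∈ (I ∩ K) ∩ (maxElems lt' I ∪ maxElems lt' K) :=
        ⟨⟨hpI, h2.1⟩, Or.inr h2⟩
      have hU : p ∉ maxElems lt' (I ∪ K) := by
        have hq : ¬ (∀ q ∈ I, ¬ lt' p q) := fun h => h1 ⟨hpI, h⟩
        push_neg at hq
        obtain ⟨q, hqI, hpq⟩ := hq
        intro hU
        exact hU.2 q (Or.inl hqI) hpq
      simp [hS, hU, h1, h2]
    · have hS : p ∉ (I ∩ K) ∩ (maxElems lt' I ∪ maxElems lt' K) :=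
        fun hS => hpI hS.1.1
      have hU : p ∈ maxElems lt' (I ∪ K) := by
        refine ⟨Or.inr h2.1, ?_⟩
        rintro q (hq | hq) hpq
        · exact hpI (hI (hweak _ _ hpq) hq)
        · exact h2.2 q hq hpq
      simp [hS, hU, h1, h2]
  · have hS : p ∉ (I ∩ K) ∩ (maxElems lt' I ∪ maxElems lt' K) := by
      rintro ⟨_, h | h⟩
      · exact h1 h
      · exact h2 h
    have hU : p ∉ maxElems lt' (I ∪ K) := by
      rintro ⟨hpU, hmax⟩
      rcases hpU with hpI | hpK
      · have hq : ¬ (∀ q ∈ I, ¬ lt' p q) := fun h => h1 ⟨hpI, h⟩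
        push_neg at hq
        obtain ⟨q, hqI, hpq⟩ := hq
        exact hmax q (Or.inl hqI) hpq
      · have hq : ¬ (∀ q ∈ K, ¬ lt' p q) := fun h => h2 ⟨hpK, h⟩
        push_neg at hq
        obtain ⟨q, hqK, hpq⟩ := hq
        exact hmax q (Or.inr hqK) hpq
    simp [hS, hU, h1, h2]

end Star

section SortSec

variable (lt lt' : P → P → Prop)

/-- potential of a single ideal. -/
noncomputable def phi (c : ℕ) (I : Set P) : ℕ := (2*c+1) * I.ncard + (c - I.ncard^2)

/-- potential of a multiset of ideals. -/
noncomputable def Phi (c : ℕ) (M : Multiset (Set P)) : ℕ := (M.map (phi c)).sum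

lemma phi_pair_lt {n s a b i k : ℕ} (hs : s ≤ a) (hab : b + a = i + k)
    (hib : i < b) (hkb : k < b) (hin : i ≤ n) (hkn : k ≤ n) (hbn : b ≤ n) (hsn : s ≤ n) :
    (2*n^2+1)*s + (n^2 - s^2) + ((2*n^2+1)*b + (n^2 - b^2))
      < (2*n^2+1)*i + (n^2 - i^2) + ((2*n^2+1)*k + (n^2 - k^2)) := by
  have hs2 : s^2 ≤ n^2 := Nat.pow_le_pow_left hsn 2
  have hb2 : b^2 ≤ n^2 := Nat.pow_le_pow_left hbn 2
  have hi2 : i^2 ≤ n^2 := Nat.pow_le_pow_left hin 2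
  have hk2 : k^2 ≤ n^2 := Nat.pow_le_pow_left hkn 2
  zify [hs2, hb2, hi2, hk2]
  have habz : (b:ℤ) + a = i + k := by exact_mod_cast hab
  have hi2z : (i:ℤ)^2 ≤ (n:ℤ)^2 := by exact_mod_cast hi2
  have hk2z : (k:ℤ)^2 ≤ (n:ℤ)^2 := by exact_mod_cast hk2
  have hibz : (i:ℤ) < b := by exact_mod_cast hib
  have hkbz : (k:ℤ) < b := by exact_mod_cast hkb
  rcases eq_or_lt_of_le hs with heq | hlt
  · have hsaz : (s:ℤ) = a := by exact_mod_cast heq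
    nlinarith [mul_pos (show (0:ℤ) < (b:ℤ) - i by linarith)
      (show (0:ℤ) < (b:ℤ) - k by linarith)]
  · have hsaz : (s:ℤ) < a := by exact_mod_cast hlt
    nlinarith [sq_nonneg ((s:ℤ)), sq_nonneg ((b:ℤ))]

lemma ncard_le_n (I : Set P) : I.ncard ≤ Fintype.card P := by
  have := Set.ncard_le_ncard (Set.subset_univ I) Set.finite_univ
  simpa [Set.ncard_univ, Nat.card_eq_fintype_card] using this

lemma sortM (hweak : ∀ p q, lt' p q → lt p q)
    (htr : ∀ a b c, lt' a b → lt' b c → lt' a c)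
    (hstar : ∀ J1 J2 : Set P, IsLowerIdeal lt J1 → IsLowerIdeal lt J2 →
      IsLowerIdeal lt (starOp lt' J1 J2))
    (M : Multiset (Set P)) (hM : ∀ I ∈ M, IsLowerIdeal lt I) :
    ∃ M', (∀ I ∈ M', IsLowerIdeal lt I) ∧ (∀ I ∈ M', ∀ K ∈ M', I ⊆ K ∨ K ⊆ I) ∧
      ∀ p, zz lt' M' p = zz lt' M p := by
  set n := Fintype.card P with hn
  suffices h : ∀ N (M : Multiset (Set P)), Phi (n^2) M ≤ N →
      (∀ I ∈ M, IsLowerIdeal lt I) →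
      ∃ M', (∀ I ∈ M', IsLowerIdeal lt I) ∧ (∀ I ∈ M', ∀ K ∈ M', I ⊆ K ∨ K ⊆ I) ∧
        ∀ p, zz lt' M' p = zz lt' M p by
    exact h (Phi (n^2) M) M le_rfl hM
  clear hM M
  intro N
  induction N using Nat.strong_induction_on with
  | _ N ih =>
    intro M hΦ hM
    by_cases hch : ∀ I ∈ M, ∀ K ∈ M, I ⊆ K ∨ K ⊆ I
    · exact ⟨M, hM, hch, fun p => rfl⟩
    · push_neg at hch
      obtain ⟨I, hI, K, hK, hIK⟩ := hch
      have h1 : ¬ I ⊆ K := hIK.1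
      have h2 : ¬ K ⊆ I := hIK.2
      have hne : I ≠ K := fun h => h1 (h ▸ subset_rfl)
      have hKe : K ∈ M.erase I := (Multiset.mem_erase_of_ne hne.symm).mpr hK
      set M₂ := (M.erase I).erase K with hM₂def
      have hM2 : I ::ₘ K ::ₘ M₂ = M := by
        rw [Multiset.cons_erase hKe, Multiset.cons_erase hI]
      have hIid : IsLowerIdeal lt I := hM I hI
      have hKid : IsLowerIdeal lt K := hM K hK
      set S := starOp lt' I K with hSdef
      set U := I ∪ K with hUdef
      have hSid : IsLowerIdeal lt S := hstar I K hIid hKid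
      have hUid : IsLowerIdeal lt U := union_ideal lt hIid hKid
      set M' := S ::ₘ U ::ₘ M₂ with hM'def
      -- potential decreases
      have hphis : phi (n^2) S + phi (n^2) U < phi (n^2) I + phi (n^2) K := by
        have hs : S.ncard ≤ (I ∩ K).ncard :=
          Set.ncard_le_ncard (star_subset_inter lt lt' hweak hIid hKid) (Set.toFinite _)
        have hab : U.ncard + (I ∩ K).ncard = I.ncard + K.ncard :=
          Set.ncard_union_add_ncard_inter I K (Set.toFinite _) (Set.toFinite _)
        have hib : I.ncard < U.ncard := by
          apply Set.ncard_lt_ncard _ (Set.toFinite _)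
          exact ⟨Set.subset_union_left, fun h => h2 (Set.union_subset_iff.mp h).2⟩
        have hkb : K.ncard < U.ncard := by
          apply Set.ncard_lt_ncard _ (Set.toFinite _)
          exact ⟨Set.subset_union_right, fun h => h1 (Set.union_subset_iff.mp h).1⟩
        exact phi_pair_lt hs hab hib hkb (ncard_le_n I) (ncard_le_n K)
          (ncard_le_n U) (le_trans hs (le_trans (Set.ncard_le_ncard
            Set.inter_subset_left (Set.toFinite _)) (ncard_le_n I)))
      have hΦ' : Phi (n^2) M' < Phi (n^2) M := by
        have e1 : Phi (n^2) M = phi (n^2) I + (phi (n^2) K + Phi (n^2) M₂) := by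
          rw [← hM2]; simp [Phi]
        have e2 : Phi (n^2) M' = phi (n^2) S + (phi (n^2) U + Phi (n^2) M₂) := by
          simp [Phi, hM'def]
        rw [e1, e2]
        omega
      obtain ⟨M'', hid'', hch'', hzz''⟩ := ih (Phi (n^2) M')
        (lt_of_lt_of_le hΦ' hΦ) M' le_rfl (by
          intro A hA
          rcases Multiset.mem_cons.mp hA with rfl | hA
          · exact hSid
          · rcases Multiset.mem_cons.mp hA with rfl | hA
            · exact hUid
            · exact hM A (by rw [← hM2]; exact
                Multiset.mem_cons_of_mem (Multiset.mem_cons_of_mem hA)))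
      refine ⟨M'', hid'', hch'', fun p => ?_⟩
      rw [hzz'' p, ← hM2]
      simp only [hM'def, zz_cons]
      have := star_id lt lt' hweak htr hIid hKid p
      rw [← hSdef, ← hUdef] at this
      linarith

end SortSec

section Anti

variable (lt lt' : P → P → Prop)

lemma zz_replicate (n : ℕ) (I : Set P) (p : P) :
    zz lt' (Multiset.replicate n I) p = n * ind (maxElems lt' I) p := by
  induction n with
  | zero => simp [zz]
  | succ n ih =>
    rw [Multiset.replicate_succ, zz_cons, ih]
    push_cast
    ring

lemma zz_finsum {ι : Type*} (t : Finset ι) (g : ι → Multiset (Set P)) (p : P) :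
    zz lt' (∑ i ∈ t, g i) p = ∑ i ∈ t, zz lt' (g i) p := by
  induction t using Finset.cons_induction with
  | empty => simp [zz]
  | cons i t hit ih =>
    rw [Finset.sum_cons, Finset.sum_cons, ← ih]
    simp [zz]

lemma rat_mul_den (q : ℚ) (hq : 0 ≤ q) {N : ℕ} (hd : (q.den : ℕ) ∣ N) :
    ∃ k : ℕ, (k : ℚ) = q * N := by
  obtain ⟨c, rfl⟩ := hd
  refine ⟨(q.num).toNat * c, ?_⟩
  have hnum : (0:ℤ) ≤ q.num := Rat.num_nonneg.mpr hq
  have h1 : ((q.num).toNat : ℤ) = q.num := Int.toNat_of_nonneg hnum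
  push_cast
  have h2 : ((q.num.toNat : ℚ)) = ((q.num : ℚ)) := by exact_mod_cast h1
  rw [h2, ← mul_assoc, Rat.mul_den_eq_num]

lemma anti_rat (hweak : ∀ p q, lt' p q → lt p q)
    (htr : ∀ a b c, lt' a b → lt' b c → lt' a c) (hirr : ∀ p, ¬ lt' p p)
    (hstar : ∀ J1 J2 : Set P, IsLowerIdeal lt J1 → IsLowerIdeal lt J2 →
      IsLowerIdeal lt (starOp lt' J1 J2))
    {ι : Type*} (t : Finset ι) (r : ι → ℚ) (hr : ∀ i ∈ t, 0 ≤ r i)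
    (Jv : ι → Set P) (hJv : ∀ i ∈ t, IsLowerIdeal lt (Jv i))
    {p q : P} (hpq : lt p q) :
    ff lt' (fun s => ∑ i ∈ t, (r i : ℝ) * ind (maxElems lt' (Jv i)) s) q
      ≤ ff lt' (fun s => ∑ i ∈ t, (r i : ℝ) * ind (maxElems lt' (Jv i)) s) p := by
  set y : P → ℝ := fun s => ∑ i ∈ t, (r i : ℝ) * ind (maxElems lt' (Jv i)) s with hy
  set N : ℕ := ∏ i ∈ t, (r i).den with hNdef
  have hN0 : 0 < N := Finset.prod_pos (fun i _ => (r i).den_pos)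
  have hex : ∀ i : ι, ∃ k : ℕ, (i ∈ t → (k : ℝ) = (r i : ℝ) * N) := by
    intro i
    by_cases h : i ∈ t
    · obtain ⟨k, hk⟩ := rat_mul_den (r i) (hr i h)
        (show ((r i).den : ℕ) ∣ N from Finset.dvd_prod_of_mem (fun j => (r j).den) h)
      refine ⟨k, fun _ => ?_⟩
      have h3 : ((k : ℚ) : ℝ) = ((r i * (N:ℚ) : ℚ) : ℝ) := by rw [hk]
      push_cast at h3
      exact h3
    · exact ⟨0, fun h' => absurd h' h⟩
  choose k hk using hex
  set M : Multiset (Set P) := ∑ i ∈ t, Multiset.replicate (k i) (Jv i) with hMdef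
  have hMid : ∀ I ∈ M, IsLowerIdeal lt I := by
    intro I hI
    obtain ⟨i, hit, hIi⟩ := Multiset.mem_sum.mp hI
    rw [Multiset.eq_of_mem_replicate hIi]
    exact hJv i hit
  have hzzM : zz lt' M = fun s => (N:ℝ) * y s := by
    funext s
    rw [hMdef, zz_finsum]
    rw [hy]
    rw [Finset.mul_sum]
    apply Finset.sum_congr rfl
    intro i hit
    rw [zz_replicate, hk i hit]
    ring
  obtain ⟨M', hid', hch', hzz'⟩ := sortM lt lt' hweak htr hstar M hMid
  have hzzM' : zz lt' M' = fun s => (N:ℝ) * y s := by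
    funext s
    rw [show zz lt' M' s = zz lt' M s from hzz' s, hzzM]
  have hf : ∀ s, ff lt' (zz lt' M') s = (cnt M' s : ℝ) :=
    fun s => le_antisymm (M1 lt lt' hweak M' hid' s)
      (M2 lt lt' hweak htr hirr M' hid' hch' s)
  have hcnt : cnt M' q ≤ cnt M' p :=
    card_filter_mono M' _ _ (fun I hI hqI => hid' I hI hpq hqI)
  have h1 : ff lt' (zz lt' M') q ≤ ff lt' (zz lt' M') p := by
    rw [hf p, hf q]
    exact_mod_cast hcnt
  rw [hzzM'] at h1
  rw [ff_smul lt' y (Nat.cast_nonneg N) p, ff_smul lt' y (Nat.cast_nonneg N) q] at h1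
  have hN0R : (0:ℝ) < N := by exact_mod_cast hN0
  exact le_of_mul_le_mul_left h1 hN0R

lemma anti_real (hweak : ∀ p q, lt' p q → lt p q)
    (htr : ∀ a b c, lt' a b → lt' b c → lt' a c) (hirr : ∀ p, ¬ lt' p p)
    (hstar : ∀ J1 J2 : Set P, IsLowerIdeal lt J1 → IsLowerIdeal lt J2 →
      IsLowerIdeal lt (starOp lt' J1 J2))
    {ι : Type*} (t : Finset ι) (lam : ι → ℝ) (hlam : ∀ i ∈ t, 0 ≤ lam i)
    (Jv : ι → Set P) (hJv : ∀ i ∈ t, IsLowerIdeal lt (Jv i))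
    {p q : P} (hpq : lt p q) :
    ff lt' (fun s => ∑ i ∈ t, lam i * ind (maxElems lt' (Jv i)) s) q
      ≤ ff lt' (fun s => ∑ i ∈ t, lam i * ind (maxElems lt' (Jv i)) s) p := by
  set x : P → ℝ := fun s => ∑ i ∈ t, lam i * ind (maxElems lt' (Jv i)) s with hx
  apply le_of_forall_pos_le_add
  intro ε hε
  set c : ℝ := (Fintype.card P : ℝ) * t.card with hc
  have hc0 : 0 ≤ c := by positivity
  set δ : ℝ := ε / (2*c + 2) with hδdef
  have hδ : 0 < δ := by positivity
  have hex : ∀ i : ι, ∃ ri : ℚ, i ∈ t → (lam i < (ri:ℝ) ∧ (ri:ℝ) < lam i + δ) := by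
    intro i
    by_cases h : i ∈ t
    · obtain ⟨ri, h1, h2⟩ := exists_rat_btwn (lt_add_of_pos_right (lam i) hδ)
      exact ⟨ri, fun _ => ⟨h1, h2⟩⟩
    · exact ⟨0, fun h' => absurd h' h⟩
  choose r hr using hex
  have hr0 : ∀ i ∈ t, 0 ≤ r i := by
    intro i hi
    have h1 := (hr i hi).1
    have h2 := hlam i hi
    have : (0:ℝ) < (r i : ℝ) := lt_of_le_of_lt h2 h1
    exact_mod_cast le_of_lt this
  set y : P → ℝ := fun s => ∑ i ∈ t, (r i : ℝ) * ind (maxElems lt' (Jv i)) s with hy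
  have hbound : ∀ s, |x s - y s| ≤ t.card * δ := by
    intro s
    have hxy : x s - y s = ∑ i ∈ t, (lam i - (r i : ℝ)) * ind (maxElems lt' (Jv i)) s := by
      rw [hx, hy, ← Finset.sum_sub_distrib]
      exact Finset.sum_congr rfl (fun i _ => by ring)
    rw [hxy]
    calc |∑ i ∈ t, (lam i - (r i : ℝ)) * ind (maxElems lt' (Jv i)) s|
        ≤ ∑ i ∈ t, |(lam i - (r i : ℝ)) * ind (maxElems lt' (Jv i)) s| :=
          Finset.abs_sum_le_sum_abs _ _
      _ ≤ ∑ i ∈ t, δ := by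
          apply Finset.sum_le_sum
          intro i hi
          rw [abs_mul]
          have h1 := (hr i hi).1
          have h2 := (hr i hi).2
          have habs : |lam i - (r i : ℝ)| < δ := by
            rw [abs_sub_comm, abs_of_pos (by linarith)]
            linarith
          have hi1 : |ind (maxElems lt' (Jv i)) s| ≤ 1 := by
            rw [abs_of_nonneg (ind_nonneg _ _)]
            exact ind_le_one _ _
          calc |lam i - (r i : ℝ)| * |ind (maxElems lt' (Jv i)) s|
              ≤ |lam i - (r i : ℝ)| * 1 :=
                mul_le_mul_of_nonneg_left hi1 (abs_nonneg _)
            _ ≤ δ := by rw [mul_one]; exact le_of_lt habs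
      _ = t.card * δ := by rw [Finset.sum_const, nsmul_eq_mul]
  have hE : ∑ s, |x s - y s| ≤ c * δ := by
    calc ∑ s, |x s - y s| ≤ ∑ _s : P, (t.card : ℝ) * δ :=
          Finset.sum_le_sum (fun s _ => hbound s)
      _ = (Fintype.card P : ℝ) * ((t.card : ℝ) * δ) := by
          rw [Finset.sum_const, nsmul_eq_mul, Finset.card_univ]
      _ = c * δ := by rw [hc]; ring
  have h1 := ff_perturb lt' x y q
  have h2 := ff_perturb lt' y x p
  have h2' : ff lt' y p ≤ ff lt' x p + ∑ s, |x s - y s| := by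
    have : ∑ s, |y s - x s| = ∑ s, |x s - y s| :=
      Finset.sum_congr rfl (fun s _ => abs_sub_comm _ _)
    rw [this] at h2
    exact h2
  have h3 : ff lt' y q ≤ ff lt' y p := anti_rat lt lt' hweak htr hirr hstar t r hr0 Jv hJv hpq
  have h4 : 2 * (c * δ) ≤ ε := by
    have hpos : (0:ℝ) < 2*c + 2 := by positivity
    have h5 : (2*c)/(2*c+2) ≤ 1 := (div_le_one hpos).mpr (by linarith)
    calc 2 * (c * δ) = ε * ((2*c)/(2*c+2)) := by rw [hδdef]; ring
      _ ≤ ε * 1 := mul_le_mul_of_nonneg_left h5 (le_of_lt hε)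
      _ = ε := mul_one ε
  linarith

end Anti

section Count

variable (lt' : P → P → Prop)

lemma max_level_char (htr : ∀ a b c, lt' a b → lt' b c → lt' a c)
    (hirr : ∀ p, ¬ lt' p p) (x : P → ℝ) (c : ℝ) (hc : 1 ≤ c) (p : P) :
    p ∈ maxElems lt' {s | c ≤ ff lt' x s}
      ↔ (c ≤ ff lt' x p ∧ ff lt' x p - x p < c) := by
  constructor
  · rintro ⟨hp, hmax⟩
    refine ⟨hp, ?_⟩
    rcases ff_rec lt' htr hirr x p with h | ⟨q, hpq, hle⟩
    · rw [h]; linarith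
    · have hq : ¬ (c ≤ ff lt' x q) := fun hcq => hmax q hcq hpq
      push_neg at hq
      linarith
  · rintro ⟨h1, h2⟩
    refine ⟨h1, ?_⟩
    intro q hq hpq
    have := ff_succ lt' htr hirr x hpq
    have hq' : c ≤ ff lt' x q := hq
    linarith

lemma count_Ico (m : ℕ) (a b : ℤ) (h0 : 0 ≤ a) (hab : a ≤ b) (hbm : b ≤ (m:ℤ)) :
    ((Finset.univ.filter
        (fun i : Fin m => (m:ℤ) - (i:ℕ) ≤ b ∧ a < (m:ℤ) - (i:ℕ))).card : ℤ)
      = b - a := by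
  rw [Finset.card_filter]
  rw [Fin.sum_univ_eq_sum_range
    (fun n : ℕ => if (m:ℤ) - (n:ℤ) ≤ b ∧ a < (m:ℤ) - (n:ℤ) then 1 else 0) m]
  rw [← Finset.card_filter]
  have heq : (Finset.range m).filter
        (fun n : ℕ => (m:ℤ) - (n:ℤ) ≤ b ∧ a < (m:ℤ) - (n:ℤ))
      = Finset.Ico ((m:ℤ) - b).toNat ((m:ℤ) - a).toNat := by
    ext n
    simp only [Finset.mem_filter, Finset.mem_range, Finset.mem_Ico]
    omega
  rw [heq, Nat.card_Ico]
  omega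

lemma card_Ici_fin (m : ℕ) (i : Fin m) :
    (Finset.univ.filter (fun j : Fin m => i ≤ j)).card = m - i.val := by
  rw [Finset.card_filter]
  simp only [Fin.le_def]
  rw [Fin.sum_univ_eq_sum_range (fun n : ℕ => if i.val ≤ n then 1 else 0) m]
  rw [← Finset.card_filter]
  have heq : (Finset.range m).filter (fun n : ℕ => i.val ≤ n) = Finset.Ico i.val m := by
    ext n
    simp only [Finset.mem_filter, Finset.mem_range, Finset.mem_Ico]
    omega
  rw [heq, Nat.card_Ico]

lemma card_gt_fin (m : ℕ) (i : Fin m) :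
    (Finset.univ.filter (fun j : Fin m => i < j)).card = m - i.val - 1 := by
  rw [Finset.card_filter]
  simp only [Fin.lt_def]
  rw [Fin.sum_univ_eq_sum_range (fun n : ℕ => if i.val < n then 1 else 0) m]
  rw [← Finset.card_filter]
  have heq : (Finset.range m).filter (fun n : ℕ => i.val < n) = Finset.Ico (i.val+1) m := by
    ext n
    simp only [Finset.mem_filter, Finset.mem_range, Finset.mem_Ico]
    omega
  rw [heq, Nat.card_Ico]
  omega

end Count

end Stmt7Aux

open Stmt7Aux in
/-- Every integer point `x` of `m·R(P, lt, lt')` can be uniquely expressed as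
`x = 1_{max_{lt'} J_1} + ⋯ + 1_{max_{lt'} J_m}` for a weakly increasing tuple
`J_1 ⊆ ⋯ ⊆ J_m` of order ideals of `(P, lt)`. -/
theorem stmt7 {P : Type*} [Fintype P] (lt lt' : P → P → Prop)
    (hltirr : ∀ p, ¬ lt p p) (hlttr : ∀ a b c, lt a b → lt b c → lt a c)
    (hlt'irr : ∀ p, ¬ lt' p p) (hlt'tr : ∀ a b c, lt' a b → lt' b c → lt' a c)
    (hweak : ∀ p q, lt' p q → lt p q)
    (hstar : ∀ J1 J2 : Set P, IsLowerIdeal lt J1 → IsLowerIdeal lt J2 →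
      IsLowerIdeal lt (starOp lt' J1 J2))
    (m : ℕ) (x : P → ℤ)
    (hx : (fun p => (x p : ℝ)) ∈ dilate m (RPP lt lt')) :
    ∃! J : Fin m → Set P,
      ((∀ i, IsLowerIdeal lt (J i)) ∧ Monotone J ∧
        (fun p => (x p : ℝ)) = ∑ i, ind (maxElems lt' (J i))) := by
  classical
  obtain ⟨y, hy, hxy⟩ := hx
  rw [RPP, convexHull_eq] at hy
  obtain ⟨ι, t, w, z, hw0, hw1, hz, hcm⟩ := hy
  have hzJ : ∀ i : ι, ∃ J : Set P,
      i ∈ t → (IsLowerIdeal lt J ∧ z i = ind (maxElems lt' J)) := by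
    intro i
    by_cases h : i ∈ t
    · obtain ⟨J, hJ1, hJ2⟩ := hz i h
      exact ⟨J, fun _ => ⟨hJ1, hJ2⟩⟩
    · exact ⟨∅, fun h' => absurd h' h⟩
  choose Jv hJv using hzJ
  set lam : ι → ℝ := fun i => (m:ℝ) * w i with hlamdef
  set xR : P → ℝ := fun p => ((x p : ℤ) : ℝ) with hxRdef
  have hrep : xR = fun s => ∑ i ∈ t, lam i * ind (maxElems lt' (Jv i)) s := by
    funext s
    have h0 : xR s = (m:ℝ) * y s := by
      rw [← hxy]
      simp
    have h1 : y s = ∑ i ∈ t, w i * z i s := by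
      rw [← hcm, Finset.centerMass_eq_of_sum_1 t z hw1]
      simp [Finset.sum_apply]
    rw [h0, h1, Finset.mul_sum]
    apply Finset.sum_congr rfl
    intro i hi
    rw [(hJv i hi).2, hlamdef]
    ring
  have hlam0 : ∀ i ∈ t, 0 ≤ lam i := fun i hi =>
    mul_nonneg (Nat.cast_nonneg m) (hw0 i hi)
  have hJid : ∀ i ∈ t, IsLowerIdeal lt (Jv i) := fun i hi => (hJv i hi).1
  have hlamsum : ∑ i ∈ t, lam i = (m:ℝ) := by
    rw [hlamdef, ← Finset.mul_sum, hw1, mul_one]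
  have hx0 : ∀ s, 0 ≤ xR s := by
    intro s
    simp only [hrep]
    exact Finset.sum_nonneg fun i hi => mul_nonneg (hlam0 i hi) (ind_nonneg _ _)
  have hffle : ∀ s, ff lt' xR s ≤ (m:ℝ) := by
    intro s
    apply ff_le
    intro D hD
    have hcomm : ∑ d ∈ D, xR d
        = ∑ i ∈ t, lam i * ∑ d ∈ D, ind (maxElems lt' (Jv i)) d := by
      simp only [hrep]
      rw [Finset.sum_comm]
      exact Finset.sum_congr rfl fun i _ => by rw [Finset.mul_sum]
    rw [hcomm, ← hlamsum]
    apply Finset.sum_le_sum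
    intro i hi
    calc lam i * ∑ d ∈ D, ind (maxElems lt' (Jv i)) d
        ≤ lam i * 1 := mul_le_mul_of_nonneg_left
          (sum_ind_le_one lt' hD.2.2 _) (hlam0 i hi)
      _ = lam i := mul_one _
  have hanti : ∀ p q, lt p q → ff lt' xR q ≤ ff lt' xR p := by
    intro p q hpq
    simp only [hrep]
    exact anti_real lt lt' hweak hlt'tr hlt'irr hstar t lam hlam0 Jv hJid hpq
  have hint : ∀ s, ∃ b : ℤ, ff lt' xR s = (b:ℝ) := by
    intro s
    obtain ⟨D, hD, hval⟩ := ff_eq_wt lt' xR s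
    refine ⟨∑ d ∈ D, x d, ?_⟩
    rw [hval]
    push_cast
    rfl
  have hff0 : ∀ s, (0:ℝ) ≤ ff lt' xR s := fun s => ff_nonneg lt' hx0 s
  have hffx : ∀ s, xR s ≤ ff lt' xR s := fun s => ff_ge_self lt' xR s
  set Jc : Fin m → Set P := fun i => {s | (m:ℝ) - (i:ℕ) ≤ ff lt' xR s} with hJcdef
  have hJcid : ∀ i, IsLowerIdeal lt (Jc i) := by
    intro i p q hpq hq
    simp only [hJcdef, Set.mem_setOf_eq] at hq ⊢
    exact le_trans hq (hanti p q hpq)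
  have hJcmono : Monotone Jc := by
    intro i j hij s hs
    simp only [hJcdef, Set.mem_setOf_eq] at hs ⊢
    have hij' : ((i:ℕ):ℝ) ≤ ((j:ℕ):ℝ) := by exact_mod_cast hij
    linarith
  have hmaxchar : ∀ (i : Fin m) (p : P), p ∈ maxElems lt' (Jc i) ↔
      ((m:ℝ) - (i:ℕ) ≤ ff lt' xR p ∧ ff lt' xR p - xR p < (m:ℝ) - (i:ℕ)) := by
    intro i p
    have hc1 : (1:ℝ) ≤ (m:ℝ) - (i:ℕ) := by
      have hi : ((i:ℕ):ℝ) + 1 ≤ (m:ℝ) := by exact_mod_cast i.isLt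
      linarith
    simpa [hJcdef] using max_level_char lt' hlt'tr hlt'irr xR ((m:ℝ) - (i:ℕ)) hc1 p
  have hsum : xR = ∑ i, ind (maxElems lt' (Jc i)) := by
    funext s
    rw [Finset.sum_apply]
    obtain ⟨b, hb⟩ := hint s
    set a : ℤ := b - x s with hadef
    have haR : (a:ℝ) = ff lt' xR s - xR s := by
      have : (a:ℝ) = (b:ℝ) - ((x s : ℤ):ℝ) := by push_cast [hadef]; ring
      rw [this, ← hb]
    have h0a : (0:ℤ) ≤ a := by
      have h := hffx s
      have : (0:ℝ) ≤ (a:ℝ) := by rw [haR]; linarith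
      exact_mod_cast this
    have hab : a ≤ b := by
      have h := hx0 s
      have hxs : (0:ℝ) ≤ ((x s : ℤ):ℝ) := h
      have : (0:ℤ) ≤ x s := by exact_mod_cast hxs
      omega
    have hbm : b ≤ (m:ℤ) := by
      have h := hffle s
      rw [hb] at h
      exact_mod_cast h
    have hstep1 : ∑ i : Fin m, ind (maxElems lt' (Jc i)) s
        = ∑ i : Fin m, (if (m:ℤ) - (i:ℕ) ≤ b ∧ a < (m:ℤ) - (i:ℕ) then (1:ℝ) else 0) := by
      apply Finset.sum_congr rfl
      intro i _
      rw [ind_apply]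
      apply if_congr _ rfl rfl
      rw [hmaxchar i s]
      constructor
      · rintro ⟨h1, h2⟩
        constructor
        · rw [hb] at h1; exact_mod_cast h1
        · rw [← haR] at h2; exact_mod_cast h2
      · rintro ⟨h1, h2⟩
        constructor
        · rw [hb]; exact_mod_cast h1
        · rw [← haR]; exact_mod_cast h2
    rw [hstep1, Finset.sum_boole]
    have hcard := count_Ico m a b h0a hab hbm
    have : ((Finset.univ.filter
        (fun i : Fin m => (m:ℤ) - (i:ℕ) ≤ b ∧ a < (m:ℤ) - (i:ℕ))).card : ℝ)
        = ((b - a : ℤ) : ℝ) := by exact_mod_cast hcard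
    rw [this]
    have hba : b - a = x s := by omega
    rw [hba]
  have huniq : ∀ Jf : Fin m → Set P, (∀ i, IsLowerIdeal lt (Jf i)) → Monotone Jf →
      xR = ∑ i, ind (maxElems lt' (Jf i)) → Jf = Jc := by
    intro Jf hid hmono hsumf
    set M : Multiset (Set P) := Finset.univ.val.map Jf with hMdef
    have hmem : ∀ I ∈ M, ∃ i : Fin m, I = Jf i := by
      intro I hI
      obtain ⟨i, _, rfl⟩ := Multiset.mem_map.mp hI
      exact ⟨i, rfl⟩
    have hMid : ∀ I ∈ M, IsLowerIdeal lt I := by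
      intro I hI
      obtain ⟨i, rfl⟩ := hmem I hI
      exact hid i
    have hMch : ∀ I ∈ M, ∀ K ∈ M, I ⊆ K ∨ K ⊆ I := by
      intro I hI K hK
      obtain ⟨i, rfl⟩ := hmem I hI
      obtain ⟨j, rfl⟩ := hmem K hK
      rcases le_total i j with h | h
      · exact Or.inl (hmono h)
      · exact Or.inr (hmono h)
    have hzzM : zz lt' M = xR := by
      funext s
      rw [hsumf, Finset.sum_apply]
      show ((Finset.univ.val.map Jf).map (fun I => ind (maxElems lt' I) s)).sum = _
      rw [Multiset.map_map]
      rfl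
    have hcnt : ∀ s, (cnt M s : ℝ) = ff lt' xR s := by
      intro s
      rw [← hzzM]
      exact le_antisymm (M2 lt lt' hweak hlt'tr hlt'irr M hMid hMch s)
        (M1 lt lt' hweak M hMid s)
    have hcntcard : ∀ s, (cnt M s : ℕ)
        = (Finset.univ.filter (fun i : Fin m => s ∈ Jf i)).card := by
      intro s
      have : (cnt M s : ℝ)
          = ((Finset.univ.filter (fun i : Fin m => s ∈ Jf i)).card : ℝ) := by
        rw [cnt_cast]
        rw [hMdef, Multiset.map_map]
        rw [show ((Finset.univ.val.map
            ((fun I => if s ∈ I then (1:ℝ) else 0) ∘ Jf)).sum)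
          = ∑ i : Fin m, if s ∈ Jf i then (1:ℝ) else 0 from rfl]
        rw [Finset.sum_boole]
      exact_mod_cast this
    funext i
    apply Set.ext
    intro s
    constructor
    · intro hs
      have hsub : Finset.univ.filter (fun j : Fin m => i ≤ j)
          ⊆ Finset.univ.filter (fun j : Fin m => s ∈ Jf j) := by
        intro j hj
        rw [Finset.mem_filter] at hj ⊢
        exact ⟨Finset.mem_univ _, hmono hj.2 hs⟩
      have hcard := Finset.card_le_card hsub
      rw [card_Ici_fin] at hcard
      simp only [hJcdef, Set.mem_setOf_eq]
      rw [← hcnt s]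
      have h1 : ((m - i.val : ℕ) : ℝ) ≤ ((Finset.univ.filter
          (fun j : Fin m => s ∈ Jf j)).card : ℝ) := by exact_mod_cast hcard
      have h2 : ((m - i.val : ℕ) : ℝ) = (m:ℝ) - (i:ℕ) := by
        rw [Nat.cast_sub (le_of_lt i.isLt)]
      rw [← hcntcard s] at h1
      linarith
    · intro hs
      simp only [hJcdef, Set.mem_setOf_eq] at hs
      by_contra hns
      have hsub : Finset.univ.filter (fun j : Fin m => s ∈ Jf j)
          ⊆ Finset.univ.filter (fun j : Fin m => i < j) := by
        intro j hj
        rw [Finset.mem_filter] at hj ⊢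
        refine ⟨Finset.mem_univ _, ?_⟩
        by_contra hji
        push_neg at hji
        exact hns (hmono hji hj.2)
      have hcard := Finset.card_le_card hsub
      rw [card_gt_fin] at hcard
      have h1 : (cnt M s : ℝ) ≤ ((m - i.val - 1 : ℕ) : ℝ) := by
        rw [hcntcard s]
        exact_mod_cast hcard
      have h2 : ((m - i.val - 1 : ℕ) : ℝ) ≤ (m:ℝ) - (i:ℕ) - 1 := by
        have hi : i.val + 1 ≤ m := i.isLt
        have h3 : m - i.val - 1 = m - (i.val + 1) := by omega
        rw [h3, Nat.cast_sub hi]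
        push_cast
        linarith
      rw [hcnt s] at h1
      linarith
  refine ⟨Jc, ⟨hJcid, hJcmono, hsum⟩, fun Jf hJf => huniq Jf hJf.1 hJf.2.1 hJf.2.2⟩
end
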